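/- Let M be any 2×2 matrix each of whose four entries is one of the three classes Av(21) (all increasing permutations), Av(12) (all decreasing permutations), or the empty class (containing only the empty permutation). Then the monotone grid class Grid(M) is finitely based; that is, there exists a finite set B of permutations such that Grid(M) = Av(B). -/
import Mathlib


/-- A permutation of length `n`, given as a bijection of `Fin n`
(index/value `i` represents the entry `i+1` of `{1,…,n}`). -/
abbrev Perm' := Σ n : ℕ, Equiv.Perm (Fin n)

/-- `Contains σ π` means the pattern `σ` is contained in `π`. -/
def Contains (σ π : Perm') : Prop :=
  ∃ f : Fin σ.1 → Fin π.1, StrictMono f ∧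
    ∀ i j : Fin σ.1, σ.2 i < σ.2 j ↔ π.2 (f i) < π.2 (f j)

/-- A permutation class: a downward-closed set of permutations. -/
def IsPermClass (X : Set Perm') : Prop :=
  ∀ π ∈ X, ∀ σ : Perm', Contains σ π → σ ∈ X

/-- The avoidance set of a set `B` of permutations. -/
def Av (B : Set Perm') : Set Perm' := {π | ∀ β ∈ B, ¬ Contains β π}

/-- A set of permutations is finitely based if it is `Av B` for a finite `B`. -/
def FinitelyBased (X : Set Perm') : Prop := ∃ B : Set Perm', B.Finite ∧ X = Av B

/-- `PatternOn π S σ`: the entries of `π` at the set `S` of indices form a copy of `σ`. -/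
def PatternOn (π : Perm') (S : Set (Fin π.1)) (σ : Perm') : Prop :=
  ∃ f : Fin σ.1 → Fin π.1, StrictMono f ∧ Set.range f = S ∧
    ∀ i j : Fin σ.1, σ.2 i < σ.2 j ↔ π.2 (f i) < π.2 (f j)

/-- `PatternIn π S X`: the pattern of the entries of `π` at positions `S` lies in `X`. -/
def PatternIn (π : Perm') (S : Set (Fin π.1)) (X : Set Perm') : Prop :=
  ∃ σ ∈ X, PatternOn π S σ

/-- The permutation 21. -/
def perm21 : Perm' := ⟨2, Equiv.swap 0 1⟩
/-- The permutation 12. -/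
def perm12 : Perm' := ⟨2, Equiv.refl (Fin 2)⟩
/-- The empty permutation. -/
def emptyPerm : Perm' := ⟨0, Equiv.refl (Fin 0)⟩

/-- The 2×2 grid class `Grid(A,B;C,D)`: `A` top-left, `B` top-right, `C` bottom-left,
`D` bottom-right.  A position `i : Fin n` represents position `i+1`, so "position `≤ v`"
is `(i:ℕ) < v`, and "value `> h`" is `h ≤ (π.2 i : ℕ)`. -/
def GridClass (A B C D : Set Perm') : Set Perm' :=
  {π | ∃ v h : ℕ, v ≤ π.1 ∧ h ≤ π.1 ∧
    PatternIn π {i | (i : ℕ) < v ∧ h ≤ (π.2 i : ℕ)} A ∧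
    PatternIn π {i | v ≤ (i : ℕ) ∧ h ≤ (π.2 i : ℕ)} B ∧
    PatternIn π {i | (i : ℕ) < v ∧ (π.2 i : ℕ) < h} C ∧
    PatternIn π {i | v ≤ (i : ℕ) ∧ (π.2 i : ℕ) < h} D}

/-- Horizontal juxtaposition of `X` (left) and `Y` (right). -/
def HJuxt (X Y : Set Perm') : Set Perm' :=
  {π | ∃ v : ℕ, v ≤ π.1 ∧
    PatternIn π {i | (i : ℕ) < v} X ∧
    PatternIn π {i | v ≤ (i : ℕ)} Y}

/-- Vertical juxtaposition of `X` (top) and `Y` (bottom). -/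
def VJuxt (X Y : Set Perm') : Set Perm' :=
  {π | ∃ h : ℕ, h ≤ π.1 ∧
    PatternIn π {i | h ≤ (π.2 i : ℕ)} X ∧
    PatternIn π {i | (π.2 i : ℕ) < h} Y}

/-- `Squint≤(A,B;C,D)`: divisions `(v, ℓ, r)` with the left h-line `ℓ` no higher
than the right h-line `r`. -/
def SquintLE (A B C D : Set Perm') : Set Perm' :=
  {π | ∃ v l r : ℕ, v ≤ π.1 ∧ l ≤ π.1 ∧ r ≤ π.1 ∧ l ≤ r ∧
    PatternIn π {i | (i : ℕ) < v ∧ l ≤ (π.2 i : ℕ)} A ∧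
    PatternIn π {i | (i : ℕ) < v ∧ (π.2 i : ℕ) < l} C ∧
    PatternIn π {i | v ≤ (i : ℕ) ∧ r ≤ (π.2 i : ℕ)} B ∧
    PatternIn π {i | v ≤ (i : ℕ) ∧ (π.2 i : ℕ) < r} D}

/-- `Squint≥(A,B;C,D)`: divisions `(v, ℓ, r)` with the left h-line `ℓ` no lower
than the right h-line `r`. -/
def SquintGE (A B C D : Set Perm') : Set Perm' :=
  {π | ∃ v l r : ℕ, v ≤ π.1 ∧ l ≤ π.1 ∧ r ≤ π.1 ∧ r ≤ l ∧
    PatternIn π {i | (i : ℕ) < v ∧ l ≤ (π.2 i : ℕ)} A ∧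
    PatternIn π {i | (i : ℕ) < v ∧ (π.2 i : ℕ) < l} C ∧
    PatternIn π {i | v ≤ (i : ℕ) ∧ r ≤ (π.2 i : ℕ)} B ∧
    PatternIn π {i | v ≤ (i : ℕ) ∧ (π.2 i : ℕ) < r} D}

/-- The basis of a set `X`: minimal permutations not in `X`. -/
def PermBasis (X : Set Perm') : Set Perm' :=
  {π | π ∉ X ∧ ∀ σ : Perm', Contains σ π → σ ≠ π → σ ∈ X}



namespace MonoGrid

/-- Forbidden orientation of a cell. -/
inductive Ori | asc | desc | pt
deriving DecidableEq

abbrev Pt := ℤ × ℤ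
abbrev Cfg := Pt × Pt

/-- `Bad t p q`: the (ordered) pair of points `(p,q)` is a forbidden configuration
of orientation `t`. -/
def Bad : Ori → Pt → Pt → Prop
  | .asc, p, q => p.1 < q.1 ∧ p.2 < q.2
  | .desc, p, q => p.1 < q.1 ∧ q.2 < p.2
  | .pt, p, q => p = q

def xmin (c : Cfg) : ℤ := c.1.1
def xmax (c : Cfg) : ℤ := c.2.1
def ymin (c : Cfg) : ℤ := min c.1.2 c.2.2
def ymax (c : Cfg) : ℤ := max c.1.2 c.2.2

lemma Bad.x_le {t : Ori} {p q : Pt} (h : Bad t p q) : p.1 ≤ q.1 := by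
  cases t
  · exact h.1.le
  · exact h.1.le
  · exact le_of_eq (congrArg Prod.fst h)

def IsCfg (t : Ori) (T : Finset Pt) (c : Cfg) : Prop :=
  c.1 ∈ T ∧ c.2 ∈ T ∧ Bad t c.1 c.2

lemma IsCfg.mono {t : Ori} {T T' : Finset Pt} (hTT : T ⊆ T') {c : Cfg}
    (h : IsCfg t T c) : IsCfg t T' c := ⟨hTT h.1, hTT h.2.1, h.2.2⟩

/-- Cover of `(v,h)` by a config in the top-left cell. -/
def covTL (t : Ori) (T : Finset Pt) (v h : ℤ) : Prop :=
  ∃ c : Cfg, IsCfg t T c ∧ xmax c < v ∧ h ≤ ymin c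

def covTR (t : Ori) (T : Finset Pt) (v h : ℤ) : Prop :=
  ∃ c : Cfg, IsCfg t T c ∧ v ≤ xmin c ∧ h ≤ ymin c

def covBL (t : Ori) (T : Finset Pt) (v h : ℤ) : Prop :=
  ∃ c : Cfg, IsCfg t T c ∧ xmax c < v ∧ ymax c < h

def covBR (t : Ori) (T : Finset Pt) (v h : ℤ) : Prop :=
  ∃ c : Cfg, IsCfg t T c ∧ v ≤ xmin c ∧ ymax c < h

def Cov (tA tB tC tD : Ori) (T : Finset Pt) (v h : ℤ) : Prop :=
  covTL tA T v h ∨ covTR tB T v h ∨ covBL tC T v h ∨ covBR tD T v h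

section Abstract

variable (tA tB tC tD : Ori) (S : Finset Pt)

/-- The cells A and C alone cover the whole column `v`. -/
def AC (v : ℤ) : Prop :=
  ∃ ca cc : Cfg, IsCfg tA S ca ∧ IsCfg tC S cc ∧ xmax ca < v ∧ xmax cc < v ∧
    ymax cc ≤ ymin ca

def BD (v : ℤ) : Prop :=
  ∃ cb cd : Cfg, IsCfg tB S cb ∧ IsCfg tD S cd ∧ v ≤ xmin cb ∧ v ≤ xmin cd ∧
    ymax cd ≤ ymin cb

def AD (v : ℤ) : Prop :=
  ∃ ca cd : Cfg, IsCfg tA S ca ∧ IsCfg tD S cd ∧ xmax ca < v ∧ v ≤ xmin cd ∧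
    ymax cd ≤ ymin ca

def BC (v : ℤ) : Prop :=
  ∃ cb cc : Cfg, IsCfg tB S cb ∧ IsCfg tC S cc ∧ v ≤ xmin cb ∧ xmax cc < v ∧
    ymax cc ≤ ymin cb

/-- One step of the greedy sweep through an A/D zone. -/
structure Stp where
  w : ℤ
  a : Cfg
  d : Cfg
  ha : IsCfg tA S a
  hd : IsCfg tD S d
  hax : xmax a < w
  hdx : w ≤ xmin d
  hlink : ymax d ≤ ymin a
  hmax : ∀ c : Cfg, IsCfg tD S c → w ≤ xmin c →
    (∃ ca : Cfg, IsCfg tA S ca ∧ xmax ca < w ∧ ymax c ≤ ymin ca) → xmin c ≤ xmin d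
  hnac : ¬ AC tA tC S w
  hnbd : ¬ BD tB tD S w


variable {tA tB tC tD S}
variable (hy : ∀ p ∈ S, ∀ q ∈ S, p.2 = q.2 → p = q)
variable (H : ∀ v h : ℤ, Cov tA tB tC tD S v h)

include H in
lemma S_nonempty : S.Nonempty := by
  rcases H 0 0 with ⟨c, hc, -⟩ | ⟨c, hc, -⟩ | ⟨c, hc, -⟩ | ⟨c, hc, -⟩ <;>
    exact ⟨c.1, hc.1⟩

include H in
lemma column (v : ℤ) : AC tA tC S v ∨ BD tB tD S v ∨ AD tA tD S v ∨ BC tB tC S v := by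
  classical
  set AS := (S ×ˢ S).filter (fun c : Cfg => Bad tA c.1 c.2 ∧ c.2.1 < v) with hAS
  set BS := (S ×ˢ S).filter (fun c : Cfg => Bad tB c.1 c.2 ∧ v ≤ c.1.1) with hBS
  have memAS : ∀ c : Cfg, c ∈ AS ↔ IsCfg tA S c ∧ xmax c < v := by
    intro c
    simp only [hAS, Finset.mem_filter, Finset.mem_product, IsCfg, xmax]
    tauto
  have memBS : ∀ c : Cfg, c ∈ BS ↔ IsCfg tB S c ∧ v ≤ xmin c := by
    intro c
    simp only [hBS, Finset.mem_filter, Finset.mem_product, IsCfg, xmin]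
    tauto
  by_cases hA : AS.Nonempty
  · obtain ⟨a, haAS, hamax⟩ := AS.exists_max_image ymin hA
    obtain ⟨ha, hax⟩ := (memAS a).1 haAS
    by_cases hB : BS.Nonempty
    · obtain ⟨b, hbBS, hbmax⟩ := BS.exists_max_image ymin hB
      obtain ⟨hb, hbx⟩ := (memBS b).1 hbBS
      rcases H v (max (ymin a) (ymin b) + 1) with ⟨c, hc, hcx, hcy⟩ | ⟨c, hc, hcx, hcy⟩ |
        ⟨c, hc, hcx, hcy⟩ | ⟨c, hc, hcx, hcy⟩
      · have := hamax c ((memAS c).2 ⟨hc, hcx⟩); omega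
      · have := hbmax c ((memBS c).2 ⟨hc, hcx⟩); omega
      · rcases max_cases (ymin a) (ymin b) with ⟨he, -⟩ | ⟨he, -⟩
        · exact Or.inl ⟨a, c, ha, hc, hax, hcx, by omega⟩
        · exact Or.inr (Or.inr (Or.inr ⟨b, c, hb, hc, hbx, hcx, by omega⟩))
      · rcases max_cases (ymin a) (ymin b) with ⟨he, -⟩ | ⟨he, -⟩
        · exact Or.inr (Or.inr (Or.inl ⟨a, c, ha, hc, hax, hcx, by omega⟩))
        · exact Or.inr (Or.inl ⟨b, c, hb, hc, hbx, hcx, by omega⟩)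
    · rcases H v (ymin a + 1) with ⟨c, hc, hcx, hcy⟩ | ⟨c, hc, hcx, hcy⟩ |
        ⟨c, hc, hcx, hcy⟩ | ⟨c, hc, hcx, hcy⟩
      · have := hamax c ((memAS c).2 ⟨hc, hcx⟩); omega
      · exact absurd ⟨c, (memBS c).2 ⟨hc, hcx⟩⟩ hB
      · exact Or.inl ⟨a, c, ha, hc, hax, hcx, by omega⟩
      · exact Or.inr (Or.inr (Or.inl ⟨a, c, ha, hc, hax, hcx, by omega⟩))
  · by_cases hB : BS.Nonempty
    · obtain ⟨b, hbBS, hbmax⟩ := BS.exists_max_image ymin hB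
      obtain ⟨hb, hbx⟩ := (memBS b).1 hbBS
      rcases H v (ymin b + 1) with ⟨c, hc, hcx, hcy⟩ | ⟨c, hc, hcx, hcy⟩ |
        ⟨c, hc, hcx, hcy⟩ | ⟨c, hc, hcx, hcy⟩
      · exact absurd ⟨c, (memAS c).2 ⟨hc, hcx⟩⟩ hA
      · have := hbmax c ((memBS c).2 ⟨hc, hcx⟩); omega
      · exact Or.inr (Or.inr (Or.inr ⟨b, c, hb, hc, hbx, hcx, by omega⟩))
      · exact Or.inr (Or.inl ⟨b, c, hb, hc, hbx, hcx, by omega⟩)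
    · exfalso
      have hS : S.Nonempty := S_nonempty H
      obtain ⟨ylow, hylow, hymin⟩ := S.exists_min_image Prod.snd hS
      rcases H v (ylow.2) with ⟨c, hc, hcx, hcy⟩ | ⟨c, hc, hcx, hcy⟩ |
        ⟨c, hc, hcx, hcy⟩ | ⟨c, hc, hcx, hcy⟩
      · exact absurd ⟨c, (memAS c).2 ⟨hc, hcx⟩⟩ hA
      · exact absurd ⟨c, (memBS c).2 ⟨hc, hcx⟩⟩ hB
      · have h1 := hymin c.1 hc.1
        have h2 := hymin c.2 hc.2.1
        simp only [ymax] at hcy; omega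
      · have h1 := hymin c.1 hc.1
        have h2 := hymin c.2 hc.2.1
        simp only [ymax] at hcy; omega

lemma AC_mono {v v' : ℤ} (hvv : v ≤ v') (h : AC tA tC S v) : AC tA tC S v' := by
  obtain ⟨ca, cc, h1, h2, h3, h4, h5⟩ := h
  exact ⟨ca, cc, h1, h2, by omega, by omega, h5⟩

lemma BD_anti {v v' : ℤ} (hvv : v ≤ v') (h : BD tB tD S v') : BD tB tD S v := by
  obtain ⟨cb, cd, h1, h2, h3, h4, h5⟩ := h
  exact ⟨cb, cd, h1, h2, by omega, by omega, h5⟩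

lemma zoneSplit {v v' : ℤ} (hvv : v ≤ v') (had : AD tA tD S v) (hbc : BC tB tC S v')
    (hnac : ¬ AC tA tC S v') (hnbd : ¬ BD tB tD S v) : False := by
  obtain ⟨ca, cd, hca, hcd, hax, hdx, hlink⟩ := had
  obtain ⟨cb, cc, hcb, hcc, hbx, hcx, hlink'⟩ := hbc
  by_cases hle : ymax cd ≤ ymin cb
  · exact hnbd ⟨cb, cd, hcb, hcd, by omega, hdx, hle⟩
  · exact hnac ⟨ca, cc, hca, hcc, by omega, hcx, by omega⟩


lemma stepExists {w : ℤ} (had : AD tA tD S w) (hnac : ¬ AC tA tC S w)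
    (hnbd : ¬ BD tB tD S w) :
    ∃ st : Stp tA tB tC tD S, st.w = w := by
  classical
  set DS := (S ×ˢ S).filter (fun c : Cfg => Bad tD c.1 c.2 ∧ w ≤ c.1.1 ∧
    ∃ ca ∈ S ×ˢ S, Bad tA ca.1 ca.2 ∧ ca.2.1 < w ∧ ymax c ≤ ymin ca) with hDS
  have memDS : ∀ c : Cfg, c ∈ DS ↔ IsCfg tD S c ∧ w ≤ xmin c ∧
      ∃ ca : Cfg, IsCfg tA S ca ∧ xmax ca < w ∧ ymax c ≤ ymin ca := by
    intro c
    simp only [hDS, Finset.mem_filter, Finset.mem_product, IsCfg, xmin, xmax]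
    constructor
    · rintro ⟨⟨m1, m2⟩, hb, hw, ca, hm, hb', hx', hy'⟩
      exact ⟨⟨m1, m2, hb⟩, hw, ca, ⟨hm.1, hm.2, hb'⟩, hx', hy'⟩
    · rintro ⟨⟨m1, m2, hb⟩, hw, ca, ⟨hm1, hm2, hb'⟩, hx', hy'⟩
      exact ⟨⟨m1, m2⟩, hb, hw, ca, ⟨hm1, hm2⟩, hb', hx', hy'⟩
  have hne : DS.Nonempty := by
    obtain ⟨ca, cd, hca, hcd, hax, hdx, hlink⟩ := had
    exact ⟨cd, (memDS cd).2 ⟨hcd, hdx, ca, hca, hax, hlink⟩⟩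
  obtain ⟨d, hdmem, hdmax⟩ := DS.exists_max_image xmin hne
  obtain ⟨hd, hwx, a, ha, hax, hlink⟩ := (memDS d).1 hdmem
  exact ⟨⟨w, a, d, ha, hd, hax, hwx, hlink,
    fun c hc hwc hex => hdmax c ((memDS c).2 ⟨hc, hwc, hex⟩), hnac, hnbd⟩, rfl⟩


lemma ladder {st st' : Stp tA tB tC tD S} (hch : st'.w = xmin st.d + 1) :
    ymin st.a < ymax st'.d := by
  by_contra hle
  push_neg at hle
  have h1 : st.w ≤ xmin st'.d := by have := st.hdx; have := st'.hdx; omega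
  have := st.hmax st'.d st'.hd h1 ⟨st.a, st.ha, st.hax, hle⟩
  have := st'.hdx
  omega

lemma aLadder {st st' : Stp tA tB tC tD S} (hch : st'.w = xmin st.d + 1) :
    ymin st.a < ymin st'.a := lt_of_lt_of_le (ladder hch) st'.hlink

lemma xpos {st st' : Stp tA tB tC tD S} (hch : st'.w = xmin st.d + 1) :
    st.w ≤ xmax st'.a := by
  by_contra h
  push_neg at h
  have h1 : st.w ≤ xmin st'.d := by have := st.hdx; have := st'.hdx; omega
  have := st.hmax st'.d st'.hd h1 ⟨st'.a, st'.ha, h, st'.hlink⟩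
  have := st'.hdx
  omega

def pmin (c : Cfg) : Pt := if c.1.2 ≤ c.2.2 then c.1 else c.2

lemma pmin_mem {t : Ori} {T : Finset Pt} {c : Cfg} (h : IsCfg t T c) : pmin c ∈ T := by
  unfold pmin; split
  · exact h.1
  · exact h.2.1

lemma pmin_y (c : Cfg) : (pmin c).2 = ymin c := by
  unfold pmin ymin; split <;> omega

lemma pmin_x {t : Ori} {c : Cfg} (hb : Bad t c.1 c.2) : (pmin c).1 ≤ xmax c := by
  have := hb.x_le
  unfold pmin xmax; split <;> omega

lemma AC_intro {v : ℤ} {ca : Cfg} (hca : IsCfg tA S ca) {p q : Pt}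
    (hp : p ∈ S) (hq : q ∈ S) (hbad : Bad tC p q) (h1 : xmax ca < v) (h2 : q.1 < v)
    (h3 : max p.2 q.2 ≤ ymin ca) : AC tA tC S v :=
  ⟨ca, (p, q), hca, ⟨hp, hq, hbad⟩, h1, h2, h3⟩

lemma falseLemma (hy : ∀ p ∈ S, ∀ q ∈ S, p.2 = q.2 → p = q)
    (st1 st2 st3 st4 : Stp tA tB tC tD S)
    (c12 : st2.w = xmin st1.d + 1) (c23 : st3.w = xmin st2.d + 1)
    (c34 : st4.w = xmin st3.d + 1) : False := by
  have L12 : ymin st1.a < ymax st2.d := ladder c12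
  have L23 : ymin st2.a < ymax st3.d := ladder c23
  have L34 : ymin st3.a < ymax st4.d := ladder c34
  have A12 : ymin st1.a < ymin st2.a := aLadder c12
  have A23 : ymin st2.a < ymin st3.a := aLadder c23
  have A34 : ymin st3.a < ymin st4.a := aLadder c34
  -- abbreviations for frequently used points
  set M1 : Pt := st1.d.1 with hM1
  set M2 : Pt := st2.d.1 with hM2
  set M3 : Pt := st3.d.1 with hM3
  have hM1S : M1 ∈ S := st1.hd.1
  have hM2S : M2 ∈ S := st2.hd.1
  have hM3S : M3 ∈ S := st3.hd.1
  have hM1y : M1.2 ≤ ymax st1.d := by simp only [hM1, ymax]; omega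
  have hM2y : M2.2 ≤ ymax st2.d := by simp only [hM2, ymax]; omega
  have hM3y : M3.2 ≤ ymax st3.d := by simp only [hM3, ymax]; omega
  have hM1x : M1.1 = xmin st1.d := rfl
  have hM2x : M2.1 = xmin st2.d := rfl
  have hM3x : M3.1 = xmin st3.d := rfl
  have hl1 := st1.hlink
  have hl2 := st2.hlink
  have hl3 := st3.hlink
  have hl4 := st4.hlink
  have hd1 := st1.hdx
  have hd2 := st2.hdx
  have hd3 := st3.hdx
  have hd4 := st4.hdx
  cases tC with
  | pt =>
    exact st2.hnac (AC_intro st2.ha hM1S hM1S rfl st2.hax (by omega) (by omega))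
  | desc =>
    -- the bottom point of α₁ together with M₁ forms a 21 below ymin st2.a
    set B1 : Pt := pmin st1.a with hB1
    have hB1S : B1 ∈ S := pmin_mem st1.ha
    have hB1y : B1.2 = ymin st1.a := pmin_y st1.a
    have hB1x : B1.1 ≤ xmax st1.a := pmin_x st1.ha.2.2
    have hxlt : B1.1 < M1.1 := by have := st1.hax; omega
    have hylt : M1.2 < B1.2 := by
      have hne : M1.2 ≠ B1.2 := fun he => by
        have := hy M1 hM1S B1 hB1S he
        rw [this] at hxlt; omega
      omega
    exact st2.hnac (AC_intro st2.ha hB1S hM1S ⟨hxlt, hylt⟩ st2.hax (by omega) (by omega))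
  | asc =>
    cases tA with
    | desc =>
      set X3 : Pt := st3.a.2 with hX3
      have hX3S : X3 ∈ S := st3.ha.2.1
      have hX3y : X3.2 = ymin st3.a := by
        have := st3.ha.2.2
        simp only [Bad] at this
        simp only [hX3, ymin]; omega
      have hX3x : X3.1 = xmax st3.a := rfl
      have hxp : st2.w ≤ xmax st3.a := xpos c23
      exact st3.hnac (AC_intro st3.ha hM1S hX3S ⟨by omega, by omega⟩ st3.hax
        (by have := st3.hax; omega) (by omega))
    | pt =>
      set X3 : Pt := st3.a.2 with hX3
      have hX3S : X3 ∈ S := st3.ha.2.1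
      have hX3y : X3.2 = ymin st3.a := by
        have := st3.ha.2.2
        simp only [Bad] at this
        simp only [hX3, ymin, this]; omega
      have hX3x : X3.1 = xmax st3.a := rfl
      have hxp : st2.w ≤ xmax st3.a := xpos c23
      exact st3.hnac (AC_intro st3.ha hM1S hX3S ⟨by omega, by omega⟩ st3.hax
        (by have := st3.hax; omega) (by omega))
    | asc =>
      cases tD with
      | desc =>
        have hM1top : M1.2 = ymax st1.d := by
          have := st1.hd.2.2; simp only [Bad] at this
          simp only [hM1, ymax]; omega
        have hM2top : M2.2 = ymax st2.d := by
          have := st2.hd.2.2; simp only [Bad] at this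
          simp only [hM2, ymax]; omega
        exact st3.hnac (AC_intro st3.ha hM1S hM2S ⟨by omega, by omega⟩ st3.hax
          (by omega) (by omega))
      | pt =>
        have hM1top : M1.2 = ymax st1.d := by
          have := st1.hd.2.2; simp only [Bad] at this
          simp only [hM1, ymax, this]; omega
        have hM2top : M2.2 = ymax st2.d := by
          have := st2.hd.2.2; simp only [Bad] at this
          simp only [hM2, ymax, this]; omega
        exact st3.hnac (AC_intro st3.ha hM1S hM2S ⟨by omega, by omega⟩ st3.hax
          (by omega) (by omega))
      | asc =>
        set T1 : Pt := st1.d.2 with hT1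
        set T2 : Pt := st2.d.2 with hT2
        have hT1S : T1 ∈ S := st1.hd.2.1
        have hT2S : T2 ∈ S := st2.hd.2.1
        have hb1 := st1.hd.2.2
        have hb2 := st2.hd.2.2
        have hb3 := st3.hd.2.2
        simp only [Bad] at hb1 hb2 hb3
        have hM1b : M1.2 = ymin st1.d := by simp only [hM1, ymin]; omega
        have hM2b : M2.2 = ymin st2.d := by simp only [hM2, ymin]; omega
        have hM3b : M3.2 = ymin st3.d := by simp only [hM3, ymin]; omega
        have hT1t : T1.2 = ymax st1.d := by simp only [hT1, ymax]; omega
        have hT2t : T2.2 = ymax st2.d := by simp only [hT2, ymax]; omega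
        -- M values strictly decrease
        have Mdec12 : M2.2 < M1.2 := by
          have hne : M1.2 ≠ M2.2 := fun he => by
            have h12 : M1 = M2 := hy M1 hM1S M2 hM2S he
            have : M1.1 = M2.1 := congrArg Prod.fst h12
            omega
          by_contra hcon
          push_neg at hcon
          exact st3.hnac (AC_intro st3.ha hM1S hM2S ⟨by omega, by omega⟩ st3.hax
            (by omega) (by omega))
        have Mdec23 : M3.2 < M2.2 := by
          have hne : M2.2 ≠ M3.2 := fun he => by
            have h23 : M2 = M3 := hy M2 hM2S M3 hM3S he
            have : M2.1 = M3.1 := congrArg Prod.fst h23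
            omega
          by_contra hcon
          push_neg at hcon
          exact st4.hnac (AC_intro st4.ha hM2S hM3S ⟨by omega, by omega⟩ st4.hax
            (by omega) (by omega))
        -- tucking of the T points
        have tuck12 : T1.1 ≤ xmin st2.d := by
          by_contra hcon
          push_neg at hcon
          have hbad : Bad .asc M2 T1 := ⟨by omega, by omega⟩
          have h2 : st1.w ≤ xmin (M2, T1) := show st1.w ≤ M2.1 by omega
          have h3 : ymax (M2, T1) ≤ ymin st1.a := show max M2.2 T1.2 ≤ ymin st1.a by omega
          have h4 := st1.hmax (M2, T1) ⟨hM2S, hT1S, hbad⟩ h2 ⟨st1.a, st1.ha, st1.hax, h3⟩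
          have h5 : M2.1 ≤ xmin st1.d := h4
          omega
        have tuck23 : T2.1 ≤ xmin st3.d := by
          by_contra hcon
          push_neg at hcon
          have hbad : Bad .asc M3 T2 := ⟨by omega, by omega⟩
          have h2 : st2.w ≤ xmin (M3, T2) := show st2.w ≤ M3.1 by omega
          have h3 : ymax (M3, T2) ≤ ymin st2.a := show max M3.2 T2.2 ≤ ymin st2.a by omega
          have h4 := st2.hmax (M3, T2) ⟨hM3S, hT2S, hbad⟩ h2 ⟨st2.a, st2.ha, st2.hax, h3⟩
          have h5 : M3.1 ≤ xmin st2.d := h4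
          omega
        -- final contradiction via the pair (T1, T2)
        have e1 : st1.d.2.1 = T1.1 := rfl
        have e2 : st2.d.2.1 = T2.1 := rfl
        have e3 : st2.d.1.1 = M2.1 := rfl
        have e4 : st2.d.1.1 = xmin st2.d := rfl
        have hbad : Bad .asc T1 T2 := ⟨by omega, by omega⟩
        exact st4.hnac (AC_intro st4.ha hT1S hT2S hbad st4.hax (by omega) (by omega))



lemma Cov_mono {T T' : Finset Pt} (hTT : T ⊆ T') {v h : ℤ}
    (hc : Cov tA tB tC tD T v h) : Cov tA tB tC tD T' v h := by
  rcases hc with ⟨c, hc, h1, h2⟩ | ⟨c, hc, h1, h2⟩ | ⟨c, hc, h1, h2⟩ | ⟨c, hc, h1, h2⟩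
  · exact Or.inl ⟨c, hc.mono hTT, h1, h2⟩
  · exact Or.inr (Or.inl ⟨c, hc.mono hTT, h1, h2⟩)
  · exact Or.inr (Or.inr (Or.inl ⟨c, hc.mono hTT, h1, h2⟩))
  · exact Or.inr (Or.inr (Or.inr ⟨c, hc.mono hTT, h1, h2⟩))

lemma card4 (a b c d : Pt) : ({a, b, c, d} : Finset Pt).card ≤ 4 := by
  apply le_trans (Finset.card_insert_le _ _)
  have h1 : ({b, c, d} : Finset Pt).card ≤ 3 := by
    apply le_trans (Finset.card_insert_le _ _)
    have h2 : ({c, d} : Finset Pt).card ≤ 2 := by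
      apply le_trans (Finset.card_insert_le _ _)
      simp
    omega
  omega

/-- A pair of configs witnessing `AC u` covers everything right of `u`. -/
lemma ACpairCover {u : ℤ} (hac : AC tA tC S u) :
    ∃ P : Finset Pt, P ⊆ S ∧ P.card ≤ 4 ∧ ∀ v h : ℤ, u ≤ v → Cov tA tB tC tD P v h := by
  obtain ⟨ca, cc, hca, hcc, h1, h2, hl⟩ := hac
  refine ⟨{ca.1, ca.2, cc.1, cc.2}, ?_, card4 _ _ _ _, ?_⟩
  · intro x hx
    simp only [Finset.mem_insert, Finset.mem_singleton] at hx
    rcases hx with rfl | rfl | rfl | rfl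
    exacts [hca.1, hca.2.1, hcc.1, hcc.2.1]
  · intro v h hv
    by_cases hh : h ≤ ymin ca
    · exact Or.inl ⟨ca, ⟨by simp, by simp, hca.2.2⟩, by omega, hh⟩
    · exact Or.inr (Or.inr (Or.inl ⟨cc, ⟨by simp, by simp, hcc.2.2⟩, by omega, by omega⟩))

lemma BDpairCover {u : ℤ} (hbd : BD tB tD S u) :
    ∃ P : Finset Pt, P ⊆ S ∧ P.card ≤ 4 ∧ ∀ v h : ℤ, v ≤ u → Cov tA tB tC tD P v h := by
  obtain ⟨cb, cd, hcb, hcd, h1, h2, hl⟩ := hbd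
  refine ⟨{cb.1, cb.2, cd.1, cd.2}, ?_, card4 _ _ _ _, ?_⟩
  · intro x hx
    simp only [Finset.mem_insert, Finset.mem_singleton] at hx
    rcases hx with rfl | rfl | rfl | rfl
    exacts [hcb.1, hcb.2.1, hcd.1, hcd.2.1]
  · intro v h hv
    by_cases hh : h ≤ ymin cb
    · exact Or.inr (Or.inl ⟨cb, ⟨by simp, by simp, hcb.2.2⟩, by omega, hh⟩)
    · exact Or.inr (Or.inr (Or.inr ⟨cd, ⟨by simp, by simp, hcd.2.2⟩, by omega, by omega⟩))

/-- The four points of a sweep step. -/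
def stPts (st : Stp tA tB tC tD S) : Finset Pt := {st.a.1, st.a.2, st.d.1, st.d.2}

lemma stPts_subset (st : Stp tA tB tC tD S) : stPts st ⊆ S := by
  intro x hx
  simp only [stPts, Finset.mem_insert, Finset.mem_singleton] at hx
  rcases hx with rfl | rfl | rfl | rfl
  exacts [st.ha.1, st.ha.2.1, st.hd.1, st.hd.2.1]

lemma stPts_card (st : Stp tA tB tC tD S) : (stPts st).card ≤ 4 := card4 _ _ _ _

lemma stepCover (st : Stp tA tB tC tD S) {v h : ℤ} (h1 : st.w ≤ v) (h2 : v ≤ xmin st.d) :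
    Cov tA tB tC tD (stPts st) v h := by
  by_cases hh : h ≤ ymin st.a
  · refine Or.inl ⟨st.a, ⟨?_, ?_, st.ha.2.2⟩, by have := st.hax; omega, hh⟩ <;>
      simp [stPts]
  · refine Or.inr (Or.inr (Or.inr ⟨st.d, ⟨?_, ?_, st.hd.2.2⟩, h2, by
      have := st.hlink; omega⟩)) <;> simp [stPts]

include H in
lemma nextStep {st : Stp tA tB tC tD S} (hnac' : ¬ AC tA tC S (xmin st.d + 1)) :
    ∃ st' : Stp tA tB tC tD S, st'.w = xmin st.d + 1 := by
  have hw : st.w ≤ xmin st.d + 1 := by have := st.hdx; omega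
  have hnbd' : ¬ BD tB tD S (xmin st.d + 1) := fun hb => st.hnbd (BD_anti hw hb)
  have had : AD tA tD S (xmin st.d + 1) := by
    rcases column H (xmin st.d + 1) with hac | hbd | had | hbc
    · exact absurd hac hnac'
    · exact absurd hbd hnbd'
    · exact had
    · exact absurd (zoneSplit hw ⟨st.a, st.d, st.ha, st.hd, st.hax, st.hdx, st.hlink⟩
        hbc hnac' st.hnbd) id
  exact stepExists had hnac' hnbd'

include hy H in
/-- The A/D-zone sweep: bounded extraction covering everything right of `w1`. -/
lemma sweepCover {w1 : ℤ} (had : AD tA tD S w1) (hnac : ¬ AC tA tC S w1)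
    (hnbd : ¬ BD tB tD S w1) :
    ∃ P : Finset Pt, P ⊆ S ∧ P.card ≤ 16 ∧ ∀ v h : ℤ, w1 ≤ v → Cov tA tB tC tD P v h := by
  obtain ⟨st1, hw1⟩ := stepExists had hnac hnbd
  by_cases hac2 : AC tA tC S (xmin st1.d + 1)
  · obtain ⟨Pac, hPS, hPc, hPcov⟩ := ACpairCover (tB := tB) (tD := tD) hac2
    refine ⟨stPts st1 ∪ Pac, Finset.union_subset (stPts_subset st1) hPS,
      le_trans (Finset.card_union_le _ _) (by have := stPts_card st1; omega), ?_⟩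
    intro v h hv
    rcases le_or_gt v (xmin st1.d) with h1 | h1
    · exact Cov_mono Finset.subset_union_left (stepCover st1 (by omega) h1)
    · exact Cov_mono Finset.subset_union_right (hPcov v h (by omega))
  · obtain ⟨st2, hw2⟩ := nextStep H hac2
    by_cases hac3 : AC tA tC S (xmin st2.d + 1)
    · obtain ⟨Pac, hPS, hPc, hPcov⟩ := ACpairCover (tB := tB) (tD := tD) hac3
      refine ⟨stPts st1 ∪ (stPts st2 ∪ Pac), ?_, ?_, ?_⟩
      · exact Finset.union_subset (stPts_subset st1)
          (Finset.union_subset (stPts_subset st2) hPS)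
      · refine le_trans (Finset.card_union_le _ _) ?_
        have := Finset.card_union_le (stPts st2) Pac
        have := stPts_card st1; have := stPts_card st2; omega
      · intro v h hv
        rcases le_or_gt v (xmin st1.d) with h1 | h1
        · exact Cov_mono Finset.subset_union_left (stepCover st1 (by omega) h1)
        rcases le_or_gt v (xmin st2.d) with h2 | h2
        · exact Cov_mono (le_trans Finset.subset_union_left Finset.subset_union_right)
            (stepCover st2 (by omega) h2)
        · exact Cov_mono (le_trans Finset.subset_union_right Finset.subset_union_right)
            (hPcov v h (by omega))
    · obtain ⟨st3, hw3⟩ := nextStep H hac3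
      by_cases hac4 : AC tA tC S (xmin st3.d + 1)
      · obtain ⟨Pac, hPS, hPc, hPcov⟩ := ACpairCover (tB := tB) (tD := tD) hac4
        refine ⟨stPts st1 ∪ (stPts st2 ∪ (stPts st3 ∪ Pac)), ?_, ?_, ?_⟩
        · exact Finset.union_subset (stPts_subset st1) (Finset.union_subset (stPts_subset st2)
            (Finset.union_subset (stPts_subset st3) hPS))
        · refine le_trans (Finset.card_union_le _ _) ?_
          have h1 := Finset.card_union_le (stPts st2) (stPts st3 ∪ Pac)
          have h2 := Finset.card_union_le (stPts st3) Pac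
          have := stPts_card st1; have := stPts_card st2; have := stPts_card st3; omega
        · intro v h hv
          rcases le_or_gt v (xmin st1.d) with h1 | h1
          · exact Cov_mono Finset.subset_union_left (stepCover st1 (by omega) h1)
          rcases le_or_gt v (xmin st2.d) with h2 | h2
          · exact Cov_mono (le_trans Finset.subset_union_left Finset.subset_union_right)
              (stepCover st2 (by omega) h2)
          rcases le_or_gt v (xmin st3.d) with h3 | h3
          · exact Cov_mono (le_trans (le_trans Finset.subset_union_left
              Finset.subset_union_right) Finset.subset_union_right)
              (stepCover st3 (by omega) h3)
          · exact Cov_mono (le_trans (le_trans Finset.subset_union_right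
              Finset.subset_union_right) Finset.subset_union_right)
              (hPcov v h (by omega))
      · obtain ⟨st4, hw4⟩ := nextStep H hac4
        exact absurd (falseLemma hy st1 st2 st3 st4 hw2 hw3 hw4) id

end Abstract

section Reflect

def rfl2 (p : Pt) : Pt := (-p.1, p.2)

lemma rfl2_invol (p : Pt) : rfl2 (rfl2 p) = p := by simp [rfl2]

lemma mem_rfl2 {T : Finset Pt} {p : Pt} : rfl2 p ∈ T.image rfl2 ↔ p ∈ T := by
  constructor
  · intro h
    obtain ⟨q, hq, hqe⟩ := Finset.mem_image.1 h
    have : q = p := by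
      have := congrArg rfl2 hqe
      rwa [rfl2_invol, rfl2_invol] at this
    rwa [← this]
  · intro h
    exact Finset.mem_image.2 ⟨p, h, rfl⟩

lemma image_image_rfl2 (T : Finset Pt) : (T.image rfl2).image rfl2 = T := by
  rw [Finset.image_image]
  have : rfl2 ∘ rfl2 = id := funext rfl2_invol
  rw [this, Finset.image_id]

def flip : Ori → Ori
  | .asc => .desc
  | .desc => .asc
  | .pt => .pt

lemma flip_flip (t : Ori) : flip (flip t) = t := by cases t <;> rfl

lemma bad_rfl2 {t : Ori} {p q : Pt} (h : Bad t p q) : Bad (flip t) (rfl2 q) (rfl2 p) := by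
  cases t
  · simp only [Bad, flip, rfl2] at *; omega
  · simp only [Bad, flip, rfl2] at *; omega
  · simp only [Bad, flip, rfl2, Prod.ext_iff] at *; omega

lemma isCfg_rfl2 {t : Ori} {T : Finset Pt} {c : Cfg} (h : IsCfg t T c) :
    IsCfg (flip t) (T.image rfl2) (rfl2 c.2, rfl2 c.1) :=
  ⟨mem_rfl2.2 h.2.1, mem_rfl2.2 h.1, bad_rfl2 h.2.2⟩

lemma covFwd {tA tB tC tD : Ori} {T : Finset Pt} {w h : ℤ}
    (hc : Cov tA tB tC tD T w h) :
    Cov (flip tB) (flip tA) (flip tD) (flip tC) (T.image rfl2) (1 - w) h := by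
  rcases hc with ⟨c, hc, h1, h2⟩ | ⟨c, hc, h1, h2⟩ | ⟨c, hc, h1, h2⟩ | ⟨c, hc, h1, h2⟩
  · -- covTL → covTR of the image
    refine Or.inr (Or.inl ⟨(rfl2 c.2, rfl2 c.1), isCfg_rfl2 hc, ?_, ?_⟩)
    · show 1 - w ≤ -c.2.1; simp only [xmax] at h1; omega
    · show h ≤ min c.2.2 c.1.2; simp only [ymin] at h2; omega
  · refine Or.inl ⟨(rfl2 c.2, rfl2 c.1), isCfg_rfl2 hc, ?_, ?_⟩
    · show -c.1.1 < 1 - w; simp only [xmin] at h1; omega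
    · show h ≤ min c.2.2 c.1.2; simp only [ymin] at h2; omega
  · refine Or.inr (Or.inr (Or.inr ⟨(rfl2 c.2, rfl2 c.1), isCfg_rfl2 hc, ?_, ?_⟩))
    · show 1 - w ≤ -c.2.1; simp only [xmax] at h1; omega
    · show max c.2.2 c.1.2 < h; simp only [ymax] at h2; omega
  · refine Or.inr (Or.inr (Or.inl ⟨(rfl2 c.2, rfl2 c.1), isCfg_rfl2 hc, ?_, ?_⟩))
    · show -c.1.1 < 1 - w; simp only [xmin] at h1; omega
    · show max c.2.2 c.1.2 < h; simp only [ymax] at h2; omega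

lemma BCtoAD {t1 t2 : Ori} {T : Finset Pt} {w : ℤ} (h : BC t1 t2 T w) :
    AD (flip t1) (flip t2) (T.image rfl2) (1 - w) := by
  obtain ⟨cb, cc, hcb, hcc, h1, h2, hl⟩ := h
  refine ⟨(rfl2 cb.2, rfl2 cb.1), (rfl2 cc.2, rfl2 cc.1), isCfg_rfl2 hcb, isCfg_rfl2 hcc,
    ?_, ?_, ?_⟩
  · show -cb.1.1 < 1 - w; simp only [xmin] at h1; omega
  · show 1 - w ≤ -cc.2.1; simp only [xmax] at h2; omega
  · show max cc.2.2 cc.1.2 ≤ min cb.2.2 cb.1.2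
    simp only [ymax, ymin] at hl; omega

lemma ACtoBD {t1 t2 : Ori} {T : Finset Pt} {w : ℤ} (h : AC t1 t2 T w) :
    BD (flip t1) (flip t2) (T.image rfl2) (1 - w) := by
  obtain ⟨ca, cc, hca, hcc, h1, h2, hl⟩ := h
  refine ⟨(rfl2 ca.2, rfl2 ca.1), (rfl2 cc.2, rfl2 cc.1), isCfg_rfl2 hca, isCfg_rfl2 hcc,
    ?_, ?_, ?_⟩
  · show 1 - w ≤ -ca.2.1; simp only [xmax] at h1; omega
  · show 1 - w ≤ -cc.2.1; simp only [xmax] at h2; omega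
  · show max cc.2.2 cc.1.2 ≤ min ca.2.2 ca.1.2
    simp only [ymax, ymin] at hl; omega

lemma BDtoAC {t1 t2 : Ori} {T : Finset Pt} {w : ℤ} (h : BD t1 t2 T w) :
    AC (flip t1) (flip t2) (T.image rfl2) (1 - w) := by
  obtain ⟨cb, cd, hcb, hcd, h1, h2, hl⟩ := h
  refine ⟨(rfl2 cb.2, rfl2 cb.1), (rfl2 cd.2, rfl2 cd.1), isCfg_rfl2 hcb, isCfg_rfl2 hcd,
    ?_, ?_, ?_⟩
  · show -cb.1.1 < 1 - w; simp only [xmin] at h1; omega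
  · show -cd.1.1 < 1 - w; simp only [xmin] at h2; omega
  · show max cd.2.2 cd.1.2 ≤ min cb.2.2 cb.1.2
    simp only [ymax, ymin] at hl; omega

lemma hy_rfl2 {T : Finset Pt} (hy : ∀ p ∈ T, ∀ q ∈ T, p.2 = q.2 → p = q) :
    ∀ p ∈ T.image rfl2, ∀ q ∈ T.image rfl2, p.2 = q.2 → p = q := by
  intro p hp q hq he
  obtain ⟨p0, hp0, rfl⟩ := Finset.mem_image.1 hp
  obtain ⟨q0, hq0, rfl⟩ := Finset.mem_image.1 hq
  have : p0 = q0 := hy p0 hp0 q0 hq0 he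
  rw [this]

end Reflect

/-- Main abstract extraction lemma: if every division line pair is violated,
then some ≤40 points already violate every division. -/
lemma abstract_main (tA tB tC tD : Ori) (S : Finset Pt)
    (hy : ∀ p ∈ S, ∀ q ∈ S, p.2 = q.2 → p = q)
    (H : ∀ v h : ℤ, Cov tA tB tC tD S v h) :
    ∃ P : Finset Pt, P ⊆ S ∧ P.card ≤ 40 ∧ ∀ v h : ℤ, Cov tA tB tC tD P v h := by
  classical
  have hS : S.Nonempty := S_nonempty H
  have hxs : (S.image Prod.fst).Nonempty := hS.image _
  set vbot := (S.image Prod.fst).min' hxs with hvbot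
  set vtop := (S.image Prod.fst).max' hxs + 1 with hvtop
  have hxlb : ∀ p ∈ S, vbot ≤ p.1 := fun p hp =>
    Finset.min'_le _ _ (Finset.mem_image_of_mem _ hp)
  have hxub : ∀ p ∈ S, p.1 < vtop := fun p hp => by
    have := Finset.le_max' _ p.1 (Finset.mem_image_of_mem Prod.fst hp); omega
  have hbtop : vbot < vtop := by
    obtain ⟨p, hp⟩ := hS
    have := hxlb p hp; have := hxub p hp; omega
  have hACtop : AC tA tC S vtop := by
    rcases column H vtop with h | h | h | h
    · exact h
    · obtain ⟨cb, cd, hcb, hcd, h1, h2, h3⟩ := h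
      have := hxub cb.1 hcb.1; simp only [xmin] at h1; omega
    · obtain ⟨ca, cd, hca, hcd, h1, h2, h3⟩ := h
      have := hxub cd.1 hcd.1; simp only [xmin] at h2; omega
    · obtain ⟨cb, cc, hcb, hcc, h1, h2, h3⟩ := h
      have := hxub cb.1 hcb.1; simp only [xmin] at h1; omega
  have hBDbot : BD tB tD S vbot := by
    rcases column H vbot with h | h | h | h
    · obtain ⟨ca, cc, hca, hcc, h1, h2, h3⟩ := h
      have := hxlb ca.2 hca.2.1; simp only [xmax] at h1; omega
    · exact h
    · obtain ⟨ca, cd, hca, hcd, h1, h2, h3⟩ := h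
      have := hxlb ca.2 hca.2.1; simp only [xmax] at h1; omega
    · obtain ⟨cb, cc, hcb, hcc, h1, h2, h3⟩ := h
      have := hxlb cc.2 hcc.2.1; simp only [xmax] at h2; omega
  -- the least AC division
  set T1 := (Finset.Icc vbot vtop).filter (fun v => AC tA tC S v) with hT1
  have hT1ne : T1.Nonempty :=
    ⟨vtop, Finset.mem_filter.2 ⟨Finset.mem_Icc.2 ⟨by omega, le_refl _⟩, hACtop⟩⟩
  set u := T1.min' hT1ne with hu
  have hACu : AC tA tC S u := (Finset.mem_filter.1 (T1.min'_mem hT1ne)).2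
  have hu_mem := Finset.mem_Icc.1 (Finset.mem_filter.1 (T1.min'_mem hT1ne)).1
  have hu_low : ∀ v, v < u → ¬ AC tA tC S v := by
    intro v hv hac
    obtain ⟨ca, cc, hca, hcc, hax, hcx, hl⟩ := hac
    have h1 : vbot ≤ ca.2.1 := hxlb ca.2 hca.2.1
    simp only [xmax] at hax
    have hmem : v ∈ T1 := Finset.mem_filter.2
      ⟨Finset.mem_Icc.2 ⟨by omega, by omega⟩, ⟨ca, cc, hca, hcc, hax, hcx, hl⟩⟩
    have := T1.min'_le v hmem
    omega
  -- the greatest BD division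
  set T2 := (Finset.Icc vbot vtop).filter (fun v => BD tB tD S v) with hT2
  have hT2ne : T2.Nonempty :=
    ⟨vbot, Finset.mem_filter.2 ⟨Finset.mem_Icc.2 ⟨le_refl _, by omega⟩, hBDbot⟩⟩
  set d := T2.max' hT2ne with hd
  have hBDd : BD tB tD S d := (Finset.mem_filter.1 (T2.max'_mem hT2ne)).2
  have hd_mem := Finset.mem_Icc.1 (Finset.mem_filter.1 (T2.max'_mem hT2ne)).1
  have hd_high : ∀ v, d < v → ¬ BD tB tD S v := by
    intro v hv hbd
    obtain ⟨cb, cd, hcb, hcd, hbx, hdx, hl⟩ := hbd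
    have h1 : cb.1.1 < vtop := hxub cb.1 hcb.1
    simp only [xmin] at hbx
    have hmem : v ∈ T2 := Finset.mem_filter.2
      ⟨Finset.mem_Icc.2 ⟨by omega, by omega⟩, ⟨cb, cd, hcb, hcd, hbx, hdx, hl⟩⟩
    have := T2.le_max' v hmem
    omega
  by_cases hdu : u ≤ d + 1
  · obtain ⟨P1, hP1S, hP1c, hP1cov⟩ := ACpairCover (tB := tB) (tD := tD) hACu
    obtain ⟨P2, hP2S, hP2c, hP2cov⟩ := BDpairCover (tA := tA) (tC := tC) hBDd
    refine ⟨P1 ∪ P2, Finset.union_subset hP1S hP2S,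
      le_trans (Finset.card_union_le _ _) (by omega), ?_⟩
    intro v h
    rcases le_or_gt u v with h1 | h1
    · exact Cov_mono Finset.subset_union_left (hP1cov v h h1)
    · exact Cov_mono Finset.subset_union_right (hP2cov v h (by omega))
  · -- nonempty zone (d, u)
    set T3 := (Finset.Icc (d + 1) u).filter (fun v => v = u ∨ AD tA tD S v) with hT3
    have hT3ne : T3.Nonempty :=
      ⟨u, Finset.mem_filter.2 ⟨Finset.mem_Icc.2 ⟨by omega, le_refl _⟩, Or.inl rfl⟩⟩
    set m := T3.min' hT3ne with hm
    have hm_mem := Finset.mem_Icc.1 (Finset.mem_filter.1 (T3.min'_mem hT3ne)).1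
    have hm_prop := (Finset.mem_filter.1 (T3.min'_mem hT3ne)).2
    have hm_AD : ∀ v, m ≤ v → v < u → AD tA tD S v := by
      intro v h1 h2
      have hADm : AD tA tD S m := by
        rcases hm_prop with he | h
        · omega
        · exact h
      rcases column H v with hac | hbd | had | hbc
      · exact absurd hac (hu_low v h2)
      · exact absurd hbd (hd_high v (by omega))
      · exact had
      · exact absurd (zoneSplit h1 hADm hbc (hu_low v h2) (hd_high m (by omega))) id
    have hm_BC : ∀ v, d < v → v < m → BC tB tC S v := by
      intro v h1 h2
      have hvu : v < u := by omega
      rcases column H v with hac | hbd | had | hbc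
      · exact absurd hac (hu_low v hvu)
      · exact absurd hbd (hd_high v h1)
      · exfalso
        have hmem : v ∈ T3 := Finset.mem_filter.2
          ⟨Finset.mem_Icc.2 ⟨by omega, by omega⟩, Or.inr had⟩
        have := T3.min'_le v hmem
        omega
      · exact hbc
    -- right part: covers v ≥ m
    have hright : ∃ P : Finset Pt, P ⊆ S ∧ P.card ≤ 16 ∧
        ∀ v h : ℤ, m ≤ v → Cov tA tB tC tD P v h := by
      by_cases hmu : m = u
      · obtain ⟨P1, h1, h2, h3⟩ := ACpairCover (tB := tB) (tD := tD) hACu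
        exact ⟨P1, h1, by omega, fun v h hv => h3 v h (by omega)⟩
      · have hmu' : m < u := by omega
        exact sweepCover hy H (hm_AD m (le_refl _) hmu') (hu_low m hmu')
          (hd_high m (by omega))
    -- left part: covers v ≤ m - 1
    have hleft : ∃ P : Finset Pt, P ⊆ S ∧ P.card ≤ 16 ∧
        ∀ v h : ℤ, v ≤ m - 1 → Cov tA tB tC tD P v h := by
      by_cases hmd : m = d + 1
      · obtain ⟨P2, h1, h2, h3⟩ := BDpairCover (tA := tA) (tC := tC) hBDd
        exact ⟨P2, h1, by omega, fun v h hv => h3 v h (by omega)⟩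
      · -- use the reflected sweep
        have hBCm : BC tB tC S (m - 1) := hm_BC (m - 1) (by omega) (by omega)
        have hAD' : AD (flip tB) (flip tC) (S.image rfl2) (1 - (m - 1)) := BCtoAD hBCm
        have hnAC' : ¬ AC (flip tB) (flip tD) (S.image rfl2) (1 - (m - 1)) := by
          intro hac
          have := ACtoBD hac
          rw [image_image_rfl2, flip_flip, flip_flip] at this
          have he : (1 : ℤ) - (1 - (m - 1)) = m - 1 := by ring
          rw [he] at this
          exact hd_high (m - 1) (by omega) this
        have hnBD' : ¬ BD (flip tA) (flip tC) (S.image rfl2) (1 - (m - 1)) := by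
          intro hbd
          have := BDtoAC hbd
          rw [image_image_rfl2, flip_flip, flip_flip] at this
          have he : (1 : ℤ) - (1 - (m - 1)) = m - 1 := by ring
          rw [he] at this
          exact hu_low (m - 1) (by omega) this
        have hy' := hy_rfl2 hy
        have H' : ∀ v h : ℤ, Cov (flip tB) (flip tA) (flip tD) (flip tC)
            (S.image rfl2) v h := by
          intro v h
          have := covFwd (H (1 - v) h)
          have he : (1 : ℤ) - (1 - v) = v := by ring
          rwa [he] at this
        obtain ⟨P', hP'S, hP'c, hP'cov⟩ := sweepCover hy' H' hAD' hnAC' hnBD'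
        refine ⟨P'.image rfl2, ?_, le_trans Finset.card_image_le hP'c, ?_⟩
        · intro x hx
          obtain ⟨q, hq, rfl⟩ := Finset.mem_image.1 hx
          have := hP'S hq
          obtain ⟨p0, hp0, rfl⟩ := Finset.mem_image.1 this
          rwa [rfl2_invol]
        · intro v h hv
          have hcov' : Cov (flip tB) (flip tA) (flip tD) (flip tC) P' (1 - v) h :=
            hP'cov (1 - v) h (by omega)
          have := covFwd hcov'
          rw [flip_flip, flip_flip, flip_flip, flip_flip] at this
          have he : (1 : ℤ) - (1 - v) = v := by ring
          rw [he] at this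
          have hPP : P'.image rfl2 ⊆ P'.image rfl2 := le_refl _
          exact this
    obtain ⟨PR, hPRS, hPRc, hPRcov⟩ := hright
    obtain ⟨PL, hPLS, hPLc, hPLcov⟩ := hleft
    refine ⟨PL ∪ PR, Finset.union_subset hPLS hPRS,
      le_trans (Finset.card_union_le _ _) (by omega), ?_⟩
    intro v h
    rcases le_or_gt m v with h1 | h1
    · exact Cov_mono Finset.subset_union_right (hPRcov v h h1)
    · exact Cov_mono Finset.subset_union_left (hPLcov v h (by omega))

end MonoGrid

namespace MonoGrid

lemma fin2_cases (a : Fin 2) : a = 0 ∨ a = 1 := by omega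

lemma contains21_iff (σ : Perm') :
    Contains perm21 σ ↔ ∃ i j : Fin σ.1, i < j ∧ σ.2 j < σ.2 i := by
  rw [show perm21 = (⟨2, Equiv.swap 0 1⟩ : Perm') from rfl]
  constructor
  · rintro ⟨f, hf, hiff⟩
    exact ⟨f 0, f 1, hf (by decide), (hiff 1 0).1 (by decide)⟩
  · rintro ⟨i, j, hij, hval⟩
    refine ⟨fun a => if a = 0 then i else j, ?_, ?_⟩
    · intro a b hab
      rcases fin2_cases a with rfl | rfl <;> rcases fin2_cases b with rfl | rfl
      · exact absurd hab (by decide)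
      · simpa using hij
      · exact absurd hab (by decide)
      · exact absurd hab (by decide)
    · intro a b
      rcases fin2_cases a with rfl | rfl <;> rcases fin2_cases b with rfl | rfl
      · simp
      · constructor
        · intro hcon; exact absurd hcon (by decide)
        · intro hcon
          simp only [if_pos rfl, if_neg (by decide : (1 : Fin 2) ≠ 0)] at hcon
          exact absurd hcon (not_lt_of_gt hval)
      · constructor
        · intro _
          simp only [if_pos rfl, if_neg (by decide : (1 : Fin 2) ≠ 0)]
          exact hval
        · intro _; decide
      · simp

lemma contains12_iff (σ : Perm') :
    Contains perm12 σ ↔ ∃ i j : Fin σ.1, i < j ∧ σ.2 i < σ.2 j := by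
  rw [show perm12 = (⟨2, Equiv.refl (Fin 2)⟩ : Perm') from rfl]
  constructor
  · rintro ⟨f, hf, hiff⟩
    exact ⟨f 0, f 1, hf (by decide), (hiff 0 1).1 (by decide)⟩
  · rintro ⟨i, j, hij, hval⟩
    refine ⟨fun a => if a = 0 then i else j, ?_, ?_⟩
    · intro a b hab
      rcases fin2_cases a with rfl | rfl <;> rcases fin2_cases b with rfl | rfl
      · exact absurd hab (by decide)
      · simpa using hij
      · exact absurd hab (by decide)
      · exact absurd hab (by decide)
    · intro a b
      rcases fin2_cases a with rfl | rfl <;> rcases fin2_cases b with rfl | rfl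
      · simp
      · constructor
        · intro _
          simp only [if_pos rfl, if_neg (by decide : (1 : Fin 2) ≠ 0)]
          exact hval
        · intro _; decide
      · constructor
        · intro hcon; exact absurd hcon (by decide)
        · intro hcon
          simp only [if_pos rfl, if_neg (by decide : (1 : Fin 2) ≠ 0)] at hcon
          exact absurd hcon (not_lt_of_gt hval)
      · simp

lemma mem_av21 (σ : Perm') :
    σ ∈ Av {perm21} ↔ ∀ i j : Fin σ.1, i < j → σ.2 i < σ.2 j := by
  constructor
  · intro h i j hij
    by_contra hc
    push_neg at hc
    have hne : σ.2 i ≠ σ.2 j := fun he => absurd (σ.2.injective he) (ne_of_lt hij)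
    exact h perm21 rfl ((contains21_iff σ).2 ⟨i, j, hij, lt_of_le_of_ne hc (Ne.symm hne)⟩)
  · intro hmono β hβ hcon
    rw [Set.mem_singleton_iff] at hβ
    subst hβ
    obtain ⟨i, j, hij, hval⟩ := (contains21_iff σ).1 hcon
    exact absurd (hmono i j hij) (not_lt_of_gt hval)

lemma mem_av12 (σ : Perm') :
    σ ∈ Av {perm12} ↔ ∀ i j : Fin σ.1, i < j → σ.2 j < σ.2 i := by
  constructor
  · intro h i j hij
    by_contra hc
    push_neg at hc
    have hne : σ.2 i ≠ σ.2 j := fun he => absurd (σ.2.injective he) (ne_of_lt hij)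
    exact h perm12 rfl ((contains12_iff σ).2 ⟨i, j, hij, lt_of_le_of_ne hc hne⟩)
  · intro hmono β hβ hcon
    rw [Set.mem_singleton_iff] at hβ
    subst hβ
    obtain ⟨i, j, hij, hval⟩ := (contains12_iff σ).1 hcon
    exact absurd (hmono i j hij) (not_lt_of_gt hval)

def RegionInc (π : Perm') (R : Set (Fin π.1)) : Prop :=
  ∀ i ∈ R, ∀ j ∈ R, i < j → π.2 i < π.2 j

def RegionDec (π : Perm') (R : Set (Fin π.1)) : Prop :=
  ∀ i ∈ R, ∀ j ∈ R, i < j → π.2 j < π.2 i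

lemma patternIn_av21_iff (π : Perm') (R : Set (Fin π.1)) :
    PatternIn π R (Av {perm21}) ↔ RegionInc π R := by
  constructor
  · rintro ⟨σ, hσ, f, hf, hrange, hiff⟩
    intro i hi j hj hij
    rw [← hrange] at hi hj
    obtain ⟨a, rfl⟩ := hi
    obtain ⟨b, rfl⟩ := hj
    have hab : a < b := hf.lt_iff_lt.1 hij
    exact (hiff a b).1 ((mem_av21 σ).1 hσ a b hab)
  · intro hmono
    have hfin : R.Finite := Set.toFinite R
    set F : Finset (Fin π.1) := hfin.toFinset with hF
    set k := F.card with hk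
    set e : Fin k ≃o F := F.orderIsoOfFin rfl with he
    refine ⟨⟨k, Equiv.refl _⟩, (mem_av21 _).2 (fun i j hij => hij), fun a => ((e a : F) : Fin π.1),
      ?_, ?_, ?_⟩
    · intro a b hab
      exact Subtype.coe_lt_coe.2 (e.strictMono hab)
    · ext x
      constructor
      · rintro ⟨a, rfl⟩
        exact hfin.mem_toFinset.1 (e a).2
      · intro hx
        refine ⟨e.symm ⟨x, hfin.mem_toFinset.2 hx⟩, ?_⟩
        simp
    · intro a b
      simp only [Equiv.refl_apply]
      constructor
      · intro hab
        have h1 : ((e a : F) : Fin π.1) ∈ R := hfin.mem_toFinset.1 (e a).2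
        have h2 : ((e b : F) : Fin π.1) ∈ R := hfin.mem_toFinset.1 (e b).2
        exact hmono _ h1 _ h2 (Subtype.coe_lt_coe.2 (e.strictMono hab))
      · intro hab
        by_contra hc
        push_neg at hc
        rcases eq_or_lt_of_le hc with hce | hce
        · rw [hce] at hab; exact absurd hab (lt_irrefl _)
        · have h1 : ((e a : F) : Fin π.1) ∈ R := hfin.mem_toFinset.1 (e a).2
          have h2 : ((e b : F) : Fin π.1) ∈ R := hfin.mem_toFinset.1 (e b).2
          have := hmono _ h2 _ h1 (Subtype.coe_lt_coe.2 (e.strictMono hce))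
          exact absurd hab (not_lt_of_gt this)

lemma patternIn_av12_iff (π : Perm') (R : Set (Fin π.1)) :
    PatternIn π R (Av {perm12}) ↔ RegionDec π R := by
  constructor
  · rintro ⟨σ, hσ, f, hf, hrange, hiff⟩
    intro i hi j hj hij
    rw [← hrange] at hi hj
    obtain ⟨a, rfl⟩ := hi
    obtain ⟨b, rfl⟩ := hj
    have hab : a < b := hf.lt_iff_lt.1 hij
    exact (hiff b a).1 ((mem_av12 σ).1 hσ a b hab)
  · intro hmono
    have hfin : R.Finite := Set.toFinite R
    set F : Finset (Fin π.1) := hfin.toFinset with hF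
    set k := F.card with hk
    set e : Fin k ≃o F := F.orderIsoOfFin rfl with he
    refine ⟨⟨k, Fin.revPerm⟩, (mem_av12 _).2 ?_, fun a => ((e a : F) : Fin π.1),
      ?_, ?_, ?_⟩
    · intro i j hij
      exact Fin.rev_lt_rev.2 hij
    · intro a b hab
      exact Subtype.coe_lt_coe.2 (e.strictMono hab)
    · ext x
      constructor
      · rintro ⟨a, rfl⟩
        exact hfin.mem_toFinset.1 (e a).2
      · intro hx
        refine ⟨e.symm ⟨x, hfin.mem_toFinset.2 hx⟩, ?_⟩
        simp
    · intro a b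
      have h1 : ((e a : F) : Fin π.1) ∈ R := hfin.mem_toFinset.1 (e a).2
      have h2 : ((e b : F) : Fin π.1) ∈ R := hfin.mem_toFinset.1 (e b).2
      show Fin.revPerm a < Fin.revPerm b ↔ _
      rw [show (Fin.revPerm a : Fin k) = Fin.rev a from rfl,
        show (Fin.revPerm b : Fin k) = Fin.rev b from rfl, Fin.rev_lt_rev]
      constructor
      · intro hab
        exact hmono _ h2 _ h1 (Subtype.coe_lt_coe.2 (e.strictMono hab))
      · intro hab
        by_contra hc
        push_neg at hc
        rcases eq_or_lt_of_le hc with hce | hce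
        · rw [hce] at hab; exact absurd hab (lt_irrefl _)
        · have := hmono _ h1 _ h2 (Subtype.coe_lt_coe.2 (e.strictMono hce))
          exact absurd hab (not_lt_of_gt this)

lemma patternIn_empty_iff (π : Perm') (R : Set (Fin π.1)) :
    PatternIn π R {emptyPerm} ↔ R = ∅ := by
  constructor
  · rintro ⟨σ, hσ, f, hf, hrange, hiff⟩
    rw [Set.mem_singleton_iff] at hσ
    subst hσ
    rw [← hrange]
    ext x
    simp only [Set.mem_range, Set.mem_empty_iff_false, iff_false]
    rintro ⟨a, -⟩
    exact a.elim0
  · intro hR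
    rw [show emptyPerm = (⟨0, Equiv.refl (Fin 0)⟩ : Perm') from rfl]
    refine ⟨⟨0, Equiv.refl (Fin 0)⟩, rfl, fun a => a.elim0, fun a => a.elim0, ?_, fun a => a.elim0⟩
    rw [hR]
    exact Set.range_eq_empty _

end MonoGrid



namespace MonoGrid

section Glue

def ptF (π : Perm') (i : Fin π.1) : Pt := (((i : ℕ) : ℤ), ((π.2 i : ℕ) : ℤ))

def graphF (π : Perm') : Finset Pt := Finset.univ.image (ptF π)

lemma mem_graphF {π : Perm'} {p : Pt} : p ∈ graphF π ↔ ∃ i : Fin π.1, ptF π i = p := by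
  simp [graphF]

lemma graphF_y_inj (π : Perm') :
    ∀ p ∈ graphF π, ∀ q ∈ graphF π, p.2 = q.2 → p = q := by
  intro p hp q hq he
  obtain ⟨i, rfl⟩ := mem_graphF.1 hp
  obtain ⟨j, rfl⟩ := mem_graphF.1 hq
  simp only [ptF] at he ⊢
  have h1 : (π.2 i : ℕ) = (π.2 j : ℕ) := by exact_mod_cast he
  have hij : i = j := π.2.injective (Fin.ext h1)
  rw [hij]

/-- `OkT t π R`: region `R` of `π` contains no forbidden configuration of type `t`. -/
def OkT (t : Ori) (π : Perm') (R : Set (Fin π.1)) : Prop :=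
  ∀ i ∈ R, ∀ j ∈ R, ¬ Bad t (ptF π i) (ptF π j)

def CellBridge (X : Set Perm') (t : Ori) : Prop :=
  ∀ (π : Perm') (R : Set (Fin π.1)), PatternIn π R X ↔ OkT t π R

lemma ptF_lt_x {π : Perm'} {i j : Fin π.1} : (ptF π i).1 < (ptF π j).1 ↔ i < j := by
  simp only [ptF]
  rw [Fin.lt_def]
  exact_mod_cast Iff.rfl

lemma ptF_lt_y {π : Perm'} {i j : Fin π.1} : (ptF π i).2 < (ptF π j).2 ↔ π.2 i < π.2 j := by
  simp only [ptF]
  rw [Fin.lt_def]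
  exact_mod_cast Iff.rfl

lemma bridge_av21 : CellBridge (Av {perm21}) .desc := by
  intro π R
  rw [patternIn_av21_iff]
  constructor
  · intro hinc i hi j hj hb
    obtain ⟨hx, hy⟩ := hb
    have hij : i < j := ptF_lt_x.1 hx
    have := hinc i hi j hj hij
    exact absurd (ptF_lt_y.1 hy) (not_lt_of_gt this)
  · intro hok i hi j hj hij
    have h1 := hok i hi j hj
    simp only [Bad] at h1
    have hx : (ptF π i).1 < (ptF π j).1 := ptF_lt_x.2 hij
    have h2 : ¬ (ptF π j).2 < (ptF π i).2 := fun hc => h1 ⟨hx, hc⟩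
    have hle : (π.2 i : ℕ) ≤ (π.2 j : ℕ) := by
      simp only [ptF, not_lt] at h2
      exact_mod_cast h2
    have hne : (π.2 i : ℕ) ≠ (π.2 j : ℕ) := fun he =>
      absurd (π.2.injective (Fin.ext he)) (ne_of_lt hij)
    rw [Fin.lt_def]
    omega

lemma bridge_av12 : CellBridge (Av {perm12}) .asc := by
  intro π R
  rw [patternIn_av12_iff]
  constructor
  · intro hdec i hi j hj hb
    obtain ⟨hx, hy⟩ := hb
    have hij : i < j := ptF_lt_x.1 hx
    have := hdec i hi j hj hij
    exact absurd (ptF_lt_y.1 hy) (not_lt_of_gt this)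
  · intro hok i hi j hj hij
    have h1 := hok i hi j hj
    simp only [Bad] at h1
    have hx : (ptF π i).1 < (ptF π j).1 := ptF_lt_x.2 hij
    have h2 : ¬ (ptF π i).2 < (ptF π j).2 := fun hc => h1 ⟨hx, hc⟩
    have hle : (π.2 j : ℕ) ≤ (π.2 i : ℕ) := by
      simp only [ptF, not_lt] at h2
      exact_mod_cast h2
    have hne : (π.2 j : ℕ) ≠ (π.2 i : ℕ) := fun he =>
      absurd (π.2.injective (Fin.ext he)) (ne_of_gt hij)
    rw [Fin.lt_def]
    omega

lemma bridge_empty : CellBridge {emptyPerm} .pt := by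
  intro π R
  rw [patternIn_empty_iff]
  constructor
  · intro hR
    subst hR
    intro i hi
    exact absurd hi (Set.notMem_empty i)
  · intro hok
    ext i
    simp only [Set.mem_empty_iff_false, iff_false]
    intro hi
    exact hok i hi i hi rfl

end Glue

end MonoGrid


namespace MonoGrid

section GridIff

variable {A B C D : Set Perm'} {tA tB tC tD : Ori}

lemma mem_gridClass_iff (bA : CellBridge A tA) (bB : CellBridge B tB)
    (bC : CellBridge C tC) (bD : CellBridge D tD) (π : Perm') :
    π ∈ GridClass A B C D ↔ ∃ v h : ℤ, ¬ Cov tA tB tC tD (graphF π) v h := by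
  constructor
  · rintro ⟨v, h, hv, hh, h1, h2, h3, h4⟩
    refine ⟨(v : ℤ), (h : ℤ), ?_⟩
    intro hcov
    rcases hcov with ⟨c, ⟨hc1, hc2, hb⟩, hx, hyy⟩ | ⟨c, ⟨hc1, hc2, hb⟩, hx, hyy⟩ |
      ⟨c, ⟨hc1, hc2, hb⟩, hx, hyy⟩ | ⟨c, ⟨hc1, hc2, hb⟩, hx, hyy⟩
    · obtain ⟨p, q⟩ := c
      obtain ⟨i, hi⟩ := mem_graphF.1 hc1
      obtain ⟨j, hj⟩ := mem_graphF.1 hc2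
      subst hi; subst hj
      have hxle : (ptF π i).1 ≤ (ptF π j).1 := hb.x_le
      simp only [xmax] at hx
      simp only [ymin, ptF] at hyy hxle hx
      refine (bA π _).1 h1 i ⟨?_, ?_⟩ j ⟨?_, ?_⟩ hb <;> omega
    · obtain ⟨p, q⟩ := c
      obtain ⟨i, hi⟩ := mem_graphF.1 hc1
      obtain ⟨j, hj⟩ := mem_graphF.1 hc2
      subst hi; subst hj
      have hxle : (ptF π i).1 ≤ (ptF π j).1 := hb.x_le
      simp only [xmin] at hx
      simp only [ymin, ptF] at hyy hxle hx
      refine (bB π _).1 h2 i ⟨?_, ?_⟩ j ⟨?_, ?_⟩ hb <;> omega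
    · obtain ⟨p, q⟩ := c
      obtain ⟨i, hi⟩ := mem_graphF.1 hc1
      obtain ⟨j, hj⟩ := mem_graphF.1 hc2
      subst hi; subst hj
      have hxle : (ptF π i).1 ≤ (ptF π j).1 := hb.x_le
      simp only [xmax] at hx
      simp only [ymax, ptF] at hyy hxle hx
      refine (bC π _).1 h3 i ⟨?_, ?_⟩ j ⟨?_, ?_⟩ hb <;> omega
    · obtain ⟨p, q⟩ := c
      obtain ⟨i, hi⟩ := mem_graphF.1 hc1
      obtain ⟨j, hj⟩ := mem_graphF.1 hc2
      subst hi; subst hj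
      have hxle : (ptF π i).1 ≤ (ptF π j).1 := hb.x_le
      simp only [xmin] at hx
      simp only [ymax, ptF] at hyy hxle hx
      refine (bD π _).1 h4 i ⟨?_, ?_⟩ j ⟨?_, ?_⟩ hb <;> omega
  · rintro ⟨v, h, hncov⟩
    refine ⟨min v.toNat π.1, min h.toNat π.1, min_le_right _ _, min_le_right _ _,
      ?_, ?_, ?_, ?_⟩
    · refine (bA π _).2 ?_
      intro i hi j hj hb
      apply hncov
      refine Or.inl ⟨(ptF π i, ptF π j), ⟨mem_graphF.2 ⟨i, rfl⟩, mem_graphF.2 ⟨j, rfl⟩, hb⟩,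
        ?_, ?_⟩
      · show (ptF π j).1 < v
        have hjv : (j : ℕ) < min v.toNat π.1 := hj.1
        simp only [ptF]
        omega
      · show h ≤ min (ptF π i).2 (ptF π j).2
        have hi2 : min h.toNat π.1 ≤ (π.2 i : ℕ) := hi.2
        have hj2 : min h.toNat π.1 ≤ (π.2 j : ℕ) := hj.2
        have hlt : (π.2 i : ℕ) < π.1 := (π.2 i).isLt
        simp only [ptF]
        omega
    · refine (bB π _).2 ?_
      intro i hi j hj hb
      apply hncov
      refine Or.inr (Or.inl ⟨(ptF π i, ptF π j),
        ⟨mem_graphF.2 ⟨i, rfl⟩, mem_graphF.2 ⟨j, rfl⟩, hb⟩, ?_, ?_⟩)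
      · show v ≤ (ptF π i).1
        have hiv : min v.toNat π.1 ≤ (i : ℕ) := hi.1
        have hlt : (i : ℕ) < π.1 := i.isLt
        simp only [ptF]
        omega
      · show h ≤ min (ptF π i).2 (ptF π j).2
        have hi2 : min h.toNat π.1 ≤ (π.2 i : ℕ) := hi.2
        have hj2 : min h.toNat π.1 ≤ (π.2 j : ℕ) := hj.2
        have hlt : (π.2 i : ℕ) < π.1 := (π.2 i).isLt
        simp only [ptF]
        omega
    · refine (bC π _).2 ?_
      intro i hi j hj hb
      apply hncov
      refine Or.inr (Or.inr (Or.inl ⟨(ptF π i, ptF π j),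
        ⟨mem_graphF.2 ⟨i, rfl⟩, mem_graphF.2 ⟨j, rfl⟩, hb⟩, ?_, ?_⟩))
      · show (ptF π j).1 < v
        have hjv : (j : ℕ) < min v.toNat π.1 := hj.1
        simp only [ptF]
        omega
      · show max (ptF π i).2 (ptF π j).2 < h
        have hi2 : (π.2 i : ℕ) < min h.toNat π.1 := hi.2
        have hj2 : (π.2 j : ℕ) < min h.toNat π.1 := hj.2
        simp only [ptF]
        omega
    · refine (bD π _).2 ?_
      intro i hi j hj hb
      apply hncov
      refine Or.inr (Or.inr (Or.inr ⟨(ptF π i, ptF π j),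
        ⟨mem_graphF.2 ⟨i, rfl⟩, mem_graphF.2 ⟨j, rfl⟩, hb⟩, ?_, ?_⟩))
      · show v ≤ (ptF π i).1
        have hiv : min v.toNat π.1 ≤ (i : ℕ) := hi.1
        have hlt : (i : ℕ) < π.1 := i.isLt
        simp only [ptF]
        omega
      · show max (ptF π i).2 (ptF π j).2 < h
        have hi2 : (π.2 i : ℕ) < min h.toNat π.1 := hi.2
        have hj2 : (π.2 j : ℕ) < min h.toNat π.1 := hj.2
        simp only [ptF]
        omega

end GridIff

end MonoGrid


namespace MonoGrid

lemma downclosed_iff {m : ℕ} (T : Finset (Fin m))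
    (hT : ∀ a ∈ T, ∀ b : Fin m, b ≤ a → b ∈ T) (a : Fin m) :
    a ∈ T ↔ (a : ℕ) < T.card := by
  constructor
  · intro ha
    have hsub : Finset.Iic a ⊆ T := fun b hb => hT a ha b (Finset.mem_Iic.1 hb)
    have := Finset.card_le_card hsub
    rw [Fin.card_Iic] at this
    omega
  · intro hlt
    by_contra ha
    have hsub : T ⊆ Finset.Iio a := by
      intro b hb
      rw [Finset.mem_Iio]
      by_contra hba
      push_neg at hba
      exact ha (hT b hb a hba)
    have := Finset.card_le_card hsub
    rw [Fin.card_Iio] at this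
    omega

lemma ptF_injective (π : Perm') : Function.Injective (ptF π) := by
  intro i j hij
  have := congrArg Prod.fst hij
  simp only [ptF] at this
  exact Fin.ext (by exact_mod_cast this)

section Transfer

variable {tA tB tC tD : Ori} {β π : Perm'} {f : Fin β.1 → Fin π.1}

lemma bad_map (hf : StrictMono f)
    (hiff : ∀ i j, β.2 i < β.2 j ↔ π.2 (f i) < π.2 (f j)) {t : Ori} {a b : Fin β.1}
    (hb : Bad t (ptF β a) (ptF β b)) : Bad t (ptF π (f a)) (ptF π (f b)) := by
  cases t
  · obtain ⟨hx, hy⟩ := hb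
    constructor
    · exact ptF_lt_x.2 (hf (ptF_lt_x.1 hx))
    · exact ptF_lt_y.2 ((hiff a b).1 (ptF_lt_y.1 hy))
  · obtain ⟨hx, hy⟩ := hb
    constructor
    · exact ptF_lt_x.2 (hf (ptF_lt_x.1 hx))
    · exact ptF_lt_y.2 ((hiff b a).1 (ptF_lt_y.1 hy))
  · have : a = b := ptF_injective β hb
    subst this
    rfl

lemma cov_transfer (hf : StrictMono f)
    (hiff : ∀ i j, β.2 i < β.2 j ↔ π.2 (f i) < π.2 (f j)) (v h : ℤ) :
    ∃ v' h' : ℤ, ∀ {tA tB tC tD : Ori},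
      Cov tA tB tC tD (graphF β) v' h' → Cov tA tB tC tD (graphF π) v h := by
  classical
  set Tv := Finset.univ.filter (fun a : Fin β.1 => ((f a : ℕ) : ℤ) < v) with hTv
  set Th := Finset.univ.filter (fun a : Fin β.1 => ((π.2 (f a) : ℕ) : ℤ) < h) with hTh
  have hTv_dc : ∀ a ∈ Tv, ∀ b : Fin β.1, b ≤ a → b ∈ Tv := by
    intro a ha b hba
    rw [hTv, Finset.mem_filter] at ha ⊢
    refine ⟨Finset.mem_univ b, ?_⟩
    have hm : f b ≤ f a := hf.monotone hba
    have : (f b : ℕ) ≤ (f a : ℕ) := hm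
    have := ha.2
    omega
  have hposc : ∀ a : Fin β.1, (((a : ℕ) : ℤ) < (Tv.card : ℤ)) ↔ ((f a : ℕ) : ℤ) < v := by
    intro a
    have hmem : a ∈ Tv ↔ ((f a : ℕ) : ℤ) < v := by
      rw [hTv, Finset.mem_filter]
      simp
    have h2 : ((a : ℕ) < Tv.card) ↔ ((f a : ℕ) : ℤ) < v :=
      (downclosed_iff Tv hTv_dc a).symm.trans hmem
    constructor
    · intro hx
      exact h2.1 (by exact_mod_cast hx)
    · intro hx
      exact_mod_cast h2.2 hx
  have hTh_dc : ∀ x ∈ Th.image β.2, ∀ y : Fin β.1, y ≤ x → y ∈ Th.image β.2 := by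
    intro x hx y hyx
    obtain ⟨b, hb, rfl⟩ := Finset.mem_image.1 hx
    rcases eq_or_lt_of_le hyx with he | hlt
    · rw [he]; exact Finset.mem_image_of_mem _ hb
    · set c := β.2.symm y with hc
      have hcy : β.2 c = y := β.2.apply_symm_apply y
      have hcb : β.2 c < β.2 b := by rw [hcy]; exact hlt
      have hpi : π.2 (f c) < π.2 (f b) := (hiff c b).1 hcb
      have hbmem : c ∈ Th := by
        rw [hTh, Finset.mem_filter]
        refine ⟨Finset.mem_univ c, ?_⟩
        rw [hTh, Finset.mem_filter] at hb
        have h2 := hb.2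
        have h3 : (π.2 (f c) : ℕ) < (π.2 (f b) : ℕ) := hpi
        omega
      rw [← hcy]
      exact Finset.mem_image_of_mem _ hbmem
  have hcard : (Th.image β.2).card = Th.card := Finset.card_image_of_injective _ β.2.injective
  have hvalc : ∀ a : Fin β.1, (((β.2 a : ℕ) : ℤ) < (Th.card : ℤ)) ↔
      ((π.2 (f a) : ℕ) : ℤ) < h := by
    intro a
    have h1 := downclosed_iff (Th.image β.2) hTh_dc (β.2 a)
    rw [hcard] at h1
    have h2 : β.2 a ∈ Th.image β.2 ↔ a ∈ Th := by
      constructor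
      · intro hx
        obtain ⟨b, hb, hbe⟩ := Finset.mem_image.1 hx
        rwa [β.2.injective hbe] at hb
      · exact fun hx => Finset.mem_image_of_mem _ hx
    have hmem : a ∈ Th ↔ ((π.2 (f a) : ℕ) : ℤ) < h := by
      rw [hTh, Finset.mem_filter]
      simp
    have h3 : ((β.2 a : ℕ) < Th.card) ↔ ((π.2 (f a) : ℕ) : ℤ) < h :=
      (h1.symm.trans h2).trans hmem
    constructor
    · intro hx
      exact h3.1 (by exact_mod_cast hx)
    · intro hx
      exact_mod_cast h3.2 hx
  refine ⟨(Tv.card : ℤ), (Th.card : ℤ), ?_⟩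
  intro tA tB tC tD hcov
  rcases hcov with ⟨c, ⟨hc1, hc2, hb⟩, hx, hyy⟩ | ⟨c, ⟨hc1, hc2, hb⟩, hx, hyy⟩ |
    ⟨c, ⟨hc1, hc2, hb⟩, hx, hyy⟩ | ⟨c, ⟨hc1, hc2, hb⟩, hx, hyy⟩
  · obtain ⟨p, q⟩ := c
    obtain ⟨a, ha⟩ := mem_graphF.1 hc1
    obtain ⟨b, hbb⟩ := mem_graphF.1 hc2
    subst ha; subst hbb
    refine Or.inl ⟨(ptF π (f a), ptF π (f b)), ⟨mem_graphF.2 ⟨f a, rfl⟩,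
      mem_graphF.2 ⟨f b, rfl⟩, bad_map hf hiff hb⟩, ?_, ?_⟩
    · show (ptF π (f b)).1 < v
      have h1 : ((b : ℕ) : ℤ) < (Tv.card : ℤ) := hx
      exact (hposc b).1 h1
    · show h ≤ min (ptF π (f a)).2 (ptF π (f b)).2
      simp only [ymin, ptF] at hyy
      have h1 : ¬ (((β.2 a : ℕ) : ℤ) < (Th.card : ℤ)) := by omega
      have h2 : ¬ (((β.2 b : ℕ) : ℤ) < (Th.card : ℤ)) := by omega
      rw [hvalc a] at h1
      rw [hvalc b] at h2
      show h ≤ min ((π.2 (f a) : ℕ) : ℤ) ((π.2 (f b) : ℕ) : ℤ)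
      omega
  · obtain ⟨p, q⟩ := c
    obtain ⟨a, ha⟩ := mem_graphF.1 hc1
    obtain ⟨b, hbb⟩ := mem_graphF.1 hc2
    subst ha; subst hbb
    refine Or.inr (Or.inl ⟨(ptF π (f a), ptF π (f b)), ⟨mem_graphF.2 ⟨f a, rfl⟩,
      mem_graphF.2 ⟨f b, rfl⟩, bad_map hf hiff hb⟩, ?_, ?_⟩)
    · show v ≤ (ptF π (f a)).1
      have h1 : ¬ (((a : ℕ) : ℤ) < (Tv.card : ℤ)) := by
        have := hx
        simp only [xmin, ptF] at this
        omega
      rw [hposc a] at h1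
      show v ≤ ((f a : ℕ) : ℤ)
      omega
    · show h ≤ min (ptF π (f a)).2 (ptF π (f b)).2
      simp only [ymin, ptF] at hyy
      have h1 : ¬ (((β.2 a : ℕ) : ℤ) < (Th.card : ℤ)) := by omega
      have h2 : ¬ (((β.2 b : ℕ) : ℤ) < (Th.card : ℤ)) := by omega
      rw [hvalc a] at h1
      rw [hvalc b] at h2
      show h ≤ min ((π.2 (f a) : ℕ) : ℤ) ((π.2 (f b) : ℕ) : ℤ)
      omega
  · obtain ⟨p, q⟩ := c
    obtain ⟨a, ha⟩ := mem_graphF.1 hc1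
    obtain ⟨b, hbb⟩ := mem_graphF.1 hc2
    subst ha; subst hbb
    refine Or.inr (Or.inr (Or.inl ⟨(ptF π (f a), ptF π (f b)), ⟨mem_graphF.2 ⟨f a, rfl⟩,
      mem_graphF.2 ⟨f b, rfl⟩, bad_map hf hiff hb⟩, ?_, ?_⟩))
    · show (ptF π (f b)).1 < v
      have h1 : ((b : ℕ) : ℤ) < (Tv.card : ℤ) := hx
      exact (hposc b).1 h1
    · show max (ptF π (f a)).2 (ptF π (f b)).2 < h
      simp only [ymax, ptF] at hyy
      have h1 : (((β.2 a : ℕ) : ℤ) < (Th.card : ℤ)) := by omega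
      have h2 : (((β.2 b : ℕ) : ℤ) < (Th.card : ℤ)) := by omega
      rw [hvalc a] at h1
      rw [hvalc b] at h2
      show max ((π.2 (f a) : ℕ) : ℤ) ((π.2 (f b) : ℕ) : ℤ) < h
      omega
  · obtain ⟨p, q⟩ := c
    obtain ⟨a, ha⟩ := mem_graphF.1 hc1
    obtain ⟨b, hbb⟩ := mem_graphF.1 hc2
    subst ha; subst hbb
    refine Or.inr (Or.inr (Or.inr ⟨(ptF π (f a), ptF π (f b)), ⟨mem_graphF.2 ⟨f a, rfl⟩,
      mem_graphF.2 ⟨f b, rfl⟩, bad_map hf hiff hb⟩, ?_, ?_⟩))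
    · show v ≤ (ptF π (f a)).1
      have h1 : ¬ (((a : ℕ) : ℤ) < (Tv.card : ℤ)) := by
        have := hx
        simp only [xmin, ptF] at this
        omega
      rw [hposc a] at h1
      show v ≤ ((f a : ℕ) : ℤ)
      omega
    · show max (ptF π (f a)).2 (ptF π (f b)).2 < h
      simp only [ymax, ptF] at hyy
      have h1 : (((β.2 a : ℕ) : ℤ) < (Th.card : ℤ)) := by omega
      have h2 : (((β.2 b : ℕ) : ℤ) < (Th.card : ℤ)) := by omega
      rw [hvalc a] at h1
      rw [hvalc b] at h2
      show max ((π.2 (f a) : ℕ) : ℤ) ((π.2 (f b) : ℕ) : ℤ) < h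
      omega

end Transfer

lemma gridClass_closed {A B C D : Set Perm'} {tA tB tC tD : Ori}
    (bA : CellBridge A tA) (bB : CellBridge B tB) (bC : CellBridge C tC)
    (bD : CellBridge D tD) {π β : Perm'}
    (hπ : π ∈ GridClass A B C D) (hc : Contains β π) : β ∈ GridClass A B C D := by
  obtain ⟨f, hf, hiff⟩ := hc
  rw [mem_gridClass_iff bA bB bC bD] at hπ ⊢
  obtain ⟨v, h, hn⟩ := hπ
  obtain ⟨v', h', htrans⟩ := cov_transfer hf hiff v h
  exact ⟨v', h', fun hcov => hn (htrans hcov)⟩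

end MonoGrid


namespace MonoGrid

lemma extract_small {A B C D : Set Perm'} {tA tB tC tD : Ori}
    (bA : CellBridge A tA) (bB : CellBridge B tB) (bC : CellBridge C tC)
    (bD : CellBridge D tD) (π : Perm') (P : Finset Pt) (hPS : P ⊆ graphF π)
    (hcov : ∀ v h : ℤ, Cov tA tB tC tD P v h) :
    ∃ σ : Perm', σ.1 = P.card ∧ Contains σ π ∧ σ ∉ GridClass A B C D := by
  classical
  set I : Finset (Fin π.1) := Finset.univ.filter (fun i => ptF π i ∈ P) with hI
  have hPI : P = I.image (ptF π) := by
    ext p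
    constructor
    · intro hp
      obtain ⟨i, rfl⟩ := mem_graphF.1 (hPS hp)
      exact Finset.mem_image_of_mem _ (by rw [hI]; simp [hp])
    · intro hp
      obtain ⟨i, hi, rfl⟩ := Finset.mem_image.1 hp
      rw [hI] at hi
      exact (Finset.mem_filter.1 hi).2
  have hIcard : I.card = P.card := by
    rw [hPI, Finset.card_image_of_injective _ (ptF_injective π)]
  set k := I.card with hk
  set e : Fin k ≃o I := I.orderIsoOfFin rfl with he
  set V : Finset (Fin π.1) := I.image π.2 with hV
  have hVcard : V.card = k := by
    rw [hV, Finset.card_image_of_injective _ π.2.injective]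
  set u : Fin k ≃o V := V.orderIsoOfFin hVcard with hu
  set f : Fin k → Fin π.1 := fun a => ((e a : I) : Fin π.1) with hf
  have hfmem : ∀ a : Fin k, f a ∈ I := fun a => (e a).2
  have hfmono : StrictMono f := by
    intro a b hab
    exact Subtype.coe_lt_coe.2 (e.strictMono hab)
  have hmemV : ∀ a : Fin k, π.2 (f a) ∈ V := fun a => Finset.mem_image_of_mem _ (hfmem a)
  set g : Fin k → Fin k := fun a => u.symm ⟨π.2 (f a), hmemV a⟩ with hg
  have hginj : Function.Injective g := by
    intro a b hab
    rw [hg] at hab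
    have h1 : π.2 (f a) = π.2 (f b) := by
      have := u.symm.injective hab
      exact congrArg Subtype.val this
    have h2 : f a = f b := π.2.injective h1
    exact hfmono.injective h2
  have hgbij : Function.Bijective g := Finite.injective_iff_bijective.1 hginj
  set σp : Equiv.Perm (Fin k) := Equiv.ofBijective g hgbij with hσp
  have hσpg : ∀ a : Fin k, σp a = g a := fun a => rfl
  have hval_iff : ∀ a b : Fin k, σp a < σp b ↔ π.2 (f a) < π.2 (f b) := by
    intro a b
    rw [hσpg, hσpg, hg]
    simp only []
    rw [u.symm.lt_iff_lt]
    exact Subtype.mk_lt_mk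
  refine ⟨⟨k, σp⟩, hIcard, ⟨f, hfmono, fun a b => (hval_iff a b).symm.symm⟩, ?_⟩
  intro hmem
  obtain ⟨v', h', hv', hh', h1, h2, h3, h4⟩ := hmem
  -- lift the division lines of σ to division lines of π
  set v : ℤ := if hvk : v' < k then ((f ⟨v', hvk⟩ : ℕ) : ℤ) else (π.1 : ℤ) with hvdef
  set h : ℤ := if hhk : h' < k then ((((u ⟨h', hhk⟩ : V) : Fin π.1) : ℕ) : ℤ) else (π.1 : ℤ)
    with hhdef
  have hposc : ∀ a : Fin k, (((f a : ℕ) : ℤ) < v) ↔ (a : ℕ) < v' := by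
    intro a
    rw [hvdef]
    split
    · rename_i hvk
      constructor
      · intro hx
        have h5 : f a < f ⟨v', hvk⟩ := by
          rw [Fin.lt_def]
          exact_mod_cast hx
        have h6 : a < ⟨v', hvk⟩ := hfmono.lt_iff_lt.1 h5
        exact h6
      · intro hx
        have h6 : a < (⟨v', hvk⟩ : Fin k) := hx
        have h5 : f a < f ⟨v', hvk⟩ := hfmono h6
        exact_mod_cast h5
    · rename_i hvk
      constructor
      · intro _
        have := a.isLt
        omega
      · intro _
        have := (f a).isLt
        exact_mod_cast this
  have hvalc : ∀ a : Fin k, (h ≤ ((π.2 (f a) : ℕ) : ℤ)) ↔ h' ≤ (σp a : ℕ) := by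
    intro a
    rw [hhdef]
    split
    · rename_i hhk
      have hiff1 : u ⟨h', hhk⟩ ≤ ⟨π.2 (f a), hmemV a⟩ ↔ (⟨h', hhk⟩ : Fin k) ≤ σp a := by
        rw [hσpg, hg]
        constructor
        · intro hle
          have := u.symm.monotone hle
          rwa [u.symm_apply_apply] at this
        · intro hle
          have := u.monotone hle
          rwa [u.apply_symm_apply] at this
      constructor
      · intro hx
        have h5 : u ⟨h', hhk⟩ ≤ ⟨π.2 (f a), hmemV a⟩ := by
          apply Subtype.coe_le_coe.1
          show ((u ⟨h', hhk⟩ : V) : Fin π.1) ≤ π.2 (f a)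
          rw [Fin.le_def]
          exact_mod_cast hx
        exact hiff1.1 h5
      · intro hx
        have h5 := hiff1.2 hx
        have h6 : ((u ⟨h', hhk⟩ : V) : Fin π.1) ≤ π.2 (f a) := Subtype.coe_le_coe.2 h5
        rw [Fin.le_def] at h6
        exact_mod_cast h6
    · rename_i hhk
      constructor
      · intro hx
        have := (π.2 (f a)).isLt
        have : ((π.2 (f a) : ℕ) : ℤ) < (π.1 : ℤ) := by exact_mod_cast this
        omega
      · intro hx
        have := (σp a).isLt
        omega
  -- transport a violating configuration of P to a violating configuration of σ
  have hbadmap : ∀ (t : Ori) (a b : Fin k), Bad t (ptF π (f a)) (ptF π (f b)) →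
      Bad t (ptF ⟨k, σp⟩ a) (ptF ⟨k, σp⟩ b) := by
    intro t a b hb
    cases t
    · obtain ⟨hx, hy⟩ := hb
      constructor
      · exact ptF_lt_x.2 (hfmono.lt_iff_lt.1 (ptF_lt_x.1 hx))
      · exact ptF_lt_y.2 ((hval_iff a b).2 (ptF_lt_y.1 hy))
    · obtain ⟨hx, hy⟩ := hb
      constructor
      · exact ptF_lt_x.2 (hfmono.lt_iff_lt.1 (ptF_lt_x.1 hx))
      · exact ptF_lt_y.2 ((hval_iff b a).2 (ptF_lt_y.1 hy))
    · have h5 : f a = f b := ptF_injective π hb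
      have : a = b := hfmono.injective h5
      subst this
      rfl
  have hmemP : ∀ q ∈ P, ∃ a : Fin k, ptF π (f a) = q := by
    intro q hq
    rw [hPI] at hq
    obtain ⟨i, hi, rfl⟩ := Finset.mem_image.1 hq
    refine ⟨e.symm ⟨i, hi⟩, ?_⟩
    rw [hf]
    simp
  rcases hcov v h with ⟨c, ⟨hc1, hc2, hb⟩, hx, hyy⟩ | ⟨c, ⟨hc1, hc2, hb⟩, hx, hyy⟩ |
    ⟨c, ⟨hc1, hc2, hb⟩, hx, hyy⟩ | ⟨c, ⟨hc1, hc2, hb⟩, hx, hyy⟩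
  · obtain ⟨p, q⟩ := c
    obtain ⟨a, ha⟩ := hmemP p hc1
    obtain ⟨b, hbb⟩ := hmemP q hc2
    subst ha; subst hbb
    have hxle : (ptF π (f a)).1 ≤ (ptF π (f b)).1 := hb.x_le
    simp only [xmax] at hx
    simp only [ymin, ptF] at hyy hxle hx
    refine (bA _ _).1 h1 a ⟨?_, ?_⟩ b ⟨?_, ?_⟩ (hbadmap tA a b hb)
    · have h6 : ((f a : ℕ) : ℤ) < v := by omega
      exact (hposc a).1 h6
    · exact (hvalc a).1 (by omega)
    · exact (hposc b).1 (by exact_mod_cast hx)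
    · exact (hvalc b).1 (by omega)
  · obtain ⟨p, q⟩ := c
    obtain ⟨a, ha⟩ := hmemP p hc1
    obtain ⟨b, hbb⟩ := hmemP q hc2
    subst ha; subst hbb
    have hxle : (ptF π (f a)).1 ≤ (ptF π (f b)).1 := hb.x_le
    simp only [xmin] at hx
    simp only [ymin, ptF] at hyy hxle hx
    refine (bB _ _).1 h2 a ⟨?_, ?_⟩ b ⟨?_, ?_⟩ (hbadmap tB a b hb)
    · have h6 : ¬ (((f a : ℕ) : ℤ) < v) := by omega
      rw [hposc a] at h6
      omega
    · exact (hvalc a).1 (by omega)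
    · have h6 : ¬ (((f b : ℕ) : ℤ) < v) := by omega
      rw [hposc b] at h6
      omega
    · exact (hvalc b).1 (by omega)
  · obtain ⟨p, q⟩ := c
    obtain ⟨a, ha⟩ := hmemP p hc1
    obtain ⟨b, hbb⟩ := hmemP q hc2
    subst ha; subst hbb
    have hxle : (ptF π (f a)).1 ≤ (ptF π (f b)).1 := hb.x_le
    simp only [xmax] at hx
    simp only [ymax, ptF] at hyy hxle hx
    refine (bC _ _).1 h3 a ⟨?_, ?_⟩ b ⟨?_, ?_⟩ (hbadmap tC a b hb)
    · have h6 : ((f a : ℕ) : ℤ) < v := by omega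
      exact (hposc a).1 h6
    · have h6 : ¬ (h ≤ ((π.2 (f a) : ℕ) : ℤ)) := by omega
      rw [hvalc a] at h6
      have h7 : (σp a : ℕ) < h' := by omega
      exact h7
    · exact (hposc b).1 (by exact_mod_cast hx)
    · have h6 : ¬ (h ≤ ((π.2 (f b) : ℕ) : ℤ)) := by omega
      rw [hvalc b] at h6
      have h7 : (σp b : ℕ) < h' := by omega
      exact h7
  · obtain ⟨p, q⟩ := c
    obtain ⟨a, ha⟩ := hmemP p hc1
    obtain ⟨b, hbb⟩ := hmemP q hc2
    subst ha; subst hbb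
    have hxle : (ptF π (f a)).1 ≤ (ptF π (f b)).1 := hb.x_le
    simp only [xmin] at hx
    simp only [ymax, ptF] at hyy hxle hx
    refine (bD _ _).1 h4 a ⟨?_, ?_⟩ b ⟨?_, ?_⟩ (hbadmap tD a b hb)
    · have h6 : ¬ (((f a : ℕ) : ℤ) < v) := by omega
      rw [hposc a] at h6
      omega
    · have h6 : ¬ (h ≤ ((π.2 (f a) : ℕ) : ℤ)) := by omega
      rw [hvalc a] at h6
      have h7 : (σp a : ℕ) < h' := by omega
      exact h7
    · have h6 : ¬ (((f b : ℕ) : ℤ) < v) := by omega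
      rw [hposc b] at h6
      omega
    · have h6 : ¬ (h ≤ ((π.2 (f b) : ℕ) : ℤ)) := by omega
      rw [hvalc b] at h6
      have h7 : (σp b : ℕ) < h' := by omega
      exact h7

end MonoGrid

/-- Every 2×2 monotone grid class (each cell `Av(21)`, `Av(12)`, or the
empty class `{emptyPerm}`) is finitely based. -/
theorem monotone_grid2x2_finitelyBased (A B C D : Set Perm')
    (hA : A = Av {perm21} ∨ A = Av {perm12} ∨ A = {emptyPerm})
    (hB : B = Av {perm21} ∨ B = Av {perm12} ∨ B = {emptyPerm})
    (hC : C = Av {perm21} ∨ C = Av {perm12} ∨ C = {emptyPerm})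
    (hD : D = Av {perm21} ∨ D = Av {perm12} ∨ D = {emptyPerm}) :
    FinitelyBased (GridClass A B C D) := by
  classical
  obtain ⟨tA, bA⟩ : ∃ t : MonoGrid.Ori, MonoGrid.CellBridge A t := by
    rcases hA with rfl | rfl | rfl
    exacts [⟨.desc, MonoGrid.bridge_av21⟩, ⟨.asc, MonoGrid.bridge_av12⟩,
      ⟨.pt, MonoGrid.bridge_empty⟩]
  obtain ⟨tB, bB⟩ : ∃ t : MonoGrid.Ori, MonoGrid.CellBridge B t := by
    rcases hB with rfl | rfl | rfl
    exacts [⟨.desc, MonoGrid.bridge_av21⟩, ⟨.asc, MonoGrid.bridge_av12⟩,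
      ⟨.pt, MonoGrid.bridge_empty⟩]
  obtain ⟨tC, bC⟩ : ∃ t : MonoGrid.Ori, MonoGrid.CellBridge C t := by
    rcases hC with rfl | rfl | rfl
    exacts [⟨.desc, MonoGrid.bridge_av21⟩, ⟨.asc, MonoGrid.bridge_av12⟩,
      ⟨.pt, MonoGrid.bridge_empty⟩]
  obtain ⟨tD, bD⟩ : ∃ t : MonoGrid.Ori, MonoGrid.CellBridge D t := by
    rcases hD with rfl | rfl | rfl
    exacts [⟨.desc, MonoGrid.bridge_av21⟩, ⟨.asc, MonoGrid.bridge_av12⟩,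
      ⟨.pt, MonoGrid.bridge_empty⟩]
  refine ⟨{σ : Perm' | σ.1 ≤ 100 ∧ σ ∉ GridClass A B C D}, ?_, ?_⟩
  · have hfin : ({σ : Perm' | σ.1 ≤ 100} : Set Perm').Finite := by
      have h2 : (⋃ n ∈ Set.Iic 100,
          Set.range (fun e : Equiv.Perm (Fin n) => (⟨n, e⟩ : Perm'))).Finite :=
        Set.Finite.biUnion (Set.finite_Iic 100) (fun n _ => Set.finite_range _)
      refine h2.subset ?_
      intro σ hσ
      exact Set.mem_biUnion hσ ⟨σ.2, rfl⟩
    exact hfin.subset (fun σ hσ => hσ.1)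
  · ext π
    constructor
    · intro hπ β hβ hcon
      exact hβ.2 (MonoGrid.gridClass_closed bA bB bC bD hπ hcon)
    · intro hπ
      by_contra hng
      have hcovall : ∀ v h : ℤ, MonoGrid.Cov tA tB tC tD (MonoGrid.graphF π) v h := by
        intro v h
        by_contra hc
        exact hng ((MonoGrid.mem_gridClass_iff bA bB bC bD π).2 ⟨v, h, hc⟩)
      obtain ⟨P, hPS, hPc, hPcov⟩ := MonoGrid.abstract_main tA tB tC tD (MonoGrid.graphF π)
        (MonoGrid.graphF_y_inj π) hcovall
      obtain ⟨σ, hσ1, hσ2, hσ3⟩ := MonoGrid.extract_small bA bB bC bD π P hPS hPcov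
      exact hπ σ ⟨by omega, hσ3⟩ hσ2
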